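/- arXiv:2212.01645 — 5 statements merged into one kernel-verified Lean document; each statement's English description precedes it below -/
import Mathlib

section
/- Let ℓ ∈ ℕ, ℓ ≥ 2, let K = {(x,y) ∈ ℝ² : y x^ℓ = 1}, and let k ≥ ℓ+1. If r(x,y) ∈ ℝ[x,y] has degree ≤ 2k and r(x,y) > 0 for all (x,y) ∈ K, then there exist finitely many polynomials f_1,…,f_{ℓ₁}, g_1,…,g_{ℓ₂}, h_1,…,h_{ℓ₃} ∈ ℝ[x,y] such that r(x,y) = Σ_{i=1}^{ℓ₁} f_i(x,y)² + (y x^ℓ − 1)·Σ_{i=1}^{ℓ₂} g_i(x,y)² − (y x^ℓ − 1)·Σ_{i=1}^{ℓ₃} h_i(x,y)², where, with m = k + ℓ + 1, deg f_i² ≤ 2m, deg((y x^ℓ − 1)g_i²) ≤ 2m and deg((y x^ℓ − 1)h_i²) ≤ 2m for all i. -/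
open MeasureTheory Matrix Finset

noncomputable section

namespace TMP

/-- Index set for the moment matrix `M_k`: monomials `x^i y^j` with `i+j ≤ k`. -/
abbrev MIdx (k : ℕ) : Type := {p : Fin (k+1) × Fin (k+1) // (p.1 : ℕ) + (p.2 : ℕ) ≤ k}

/-- The moment matrix `M_k(β)`: the entry in row `x^{i₁}y^{j₁}` and column `x^{i₂}y^{j₂}`
is `β (i₁+i₂) (j₁+j₂)`. -/
def momentMatrix (k : ℕ) (β : ℕ → ℕ → ℝ) : Matrix (MIdx k) (MIdx k) ℝ :=
  fun r c => β ((r.1.1 : ℕ) + (c.1.1 : ℕ)) ((r.1.2 : ℕ) + (c.1.2 : ℕ))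

/-- `p(X,Y) = 0` is a column relation of `M_k(β)`. -/
def IsColRelation (k : ℕ) (β : ℕ → ℕ → ℝ) (p : MvPolynomial (Fin 2) ℝ) : Prop :=
  ∀ a b : ℕ, a + b ≤ k →
    ∑ m ∈ p.support, p.coeff m * β (a + m 0) (b + m 1) = 0

/-- `M_k(β)` is recursively generated. -/
def RecursivelyGenerated (k : ℕ) (β : ℕ → ℕ → ℝ) : Prop :=
  ∀ p q : MvPolynomial (Fin 2) ℝ,
    p.totalDegree ≤ k → q.totalDegree ≤ k → (p * q).totalDegree ≤ k →
    IsColRelation k β p → IsColRelation k β (p * q)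

/-- `β^{(d)}` has a `K`-representing measure. -/
def HasRepMeasure (K : Set (ℝ × ℝ)) (d : ℕ) (β : ℕ → ℕ → ℝ) : Prop :=
  ∃ μ : Measure (ℝ × ℝ), μ Kᶜ = 0 ∧
    ∀ i j : ℕ, i + j ≤ d →
      Integrable (fun p : ℝ × ℝ => p.1 ^ i * p.2 ^ j) μ ∧
      β i j = ∫ p : ℝ × ℝ, p.1 ^ i * p.2 ^ j ∂μ

/-- `β^{(d)}` has an `s`-atomic `K`-representing measure. -/
def HasAtomicRepMeasure (K : Set (ℝ × ℝ)) (d : ℕ) (β : ℕ → ℕ → ℝ) (s : ℕ) : Prop :=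
  ∃ (pts : Fin s → ℝ × ℝ) (ρ : Fin s → ℝ),
    Function.Injective pts ∧ (∀ p, pts p ∈ K) ∧ (∀ p, 0 < ρ p) ∧
    ∀ i j : ℕ, i + j ≤ d → β i j = ∑ p, ρ p * (pts p).1 ^ i * (pts p).2 ^ j

/-- `β'` is an extension of `β` through degree `d`. -/
def ExtendsTo (d : ℕ) (β β' : ℕ → ℕ → ℝ) : Prop :=
  ∀ i j : ℕ, i + j ≤ d → β' i j = β i j

/-- The Hankel matrix `A_v` of size `(m+1) × (m+1)` with entries `v (i+j)`. -/
def hankel (m : ℕ) (v : ℕ → ℝ) : Matrix (Fin (m+1)) (Fin (m+1)) ℝ :=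
  fun i j => v ((i : ℕ) + (j : ℕ))

/-- `q_{i,j,s}`: the coefficient of `x^s` in `x^i q(x)^j`. -/
def qCoef (q : Polynomial ℝ) (i j s : ℕ) : ℝ := (Polynomial.X ^ i * q ^ j).coeff s

/-- The bivariate polynomial `y - q(x)`. -/
def yMinusQ (q : Polynomial ℝ) : MvPolynomial (Fin 2) ℝ :=
  MvPolynomial.X 1 - Polynomial.aeval (MvPolynomial.X 0) q

/-- The bivariate polynomial `y x^ℓ - 1`. -/
def yxlMinusOne (ℓ : ℕ) : MvPolynomial (Fin 2) ℝ :=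
  MvPolynomial.X 1 * MvPolynomial.X 0 ^ ℓ - 1

/-- The rank of a univariate sequence `(v_0, …, v_{2m})`. -/
def seqRank (m : ℕ) (v : ℕ → ℝ) : ℕ :=
  if (hankel m v).det ≠ 0 then m + 1
  else sInf {i : ℕ | (fun r : Fin (m+1) => v ((r : ℕ) + i)) ∈
    Submodule.span ℝ (Set.range fun j : Fin i => fun r : Fin (m+1) => v ((r : ℕ) + (j : ℕ)))}

/-- The vector `φ = A_v(r-1)⁻¹ (v_r, …, v_{2r-1})ᵀ`. -/
def phiVec (r : ℕ) (v : ℕ → ℝ) : Fin (r - 1 + 1) → ℝ :=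
  (hankel (r - 1) v)⁻¹.mulVec fun i : Fin (r - 1 + 1) => v (r + (i : ℕ))

/-- The sequence `(v_0, …, v_{2m})` is positively recursively generated. -/
def Prg (m : ℕ) (v : ℕ → ℝ) : Prop :=
  (hankel (seqRank m v - 1) v).PosDef ∧
  (seqRank m v < m + 1 →
    ∀ j : ℕ, seqRank m v ≤ j → j ≤ 2 * m →
      v j = ∑ i : Fin (seqRank m v - 1 + 1),
        phiVec (seqRank m v) v i * v (j - seqRank m v + (i : ℕ)))

/-- The Riesz functional `L_β` of a bivariate sequence. -/
def riesz (β : ℕ → ℕ → ℝ) (p : MvPolynomial (Fin 2) ℝ) : ℝ :=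
  ∑ m ∈ p.support, p.coeff m * β (m 0) (m 1)


section AuxSOS
open Polynomial

lemma eval_nonneg_of_nonneg_compl {Q : ℝ[X]} {r : ℝ} (h : ∀ x, x ≠ r → 0 ≤ Q.eval x) :
    0 ≤ Q.eval r := by
  by_contra h'
  push_neg at h'
  have hc : Filter.Tendsto (fun x => Q.eval x) (nhds r) (nhds (Q.eval r)) :=
    (Polynomial.continuous Q).continuousAt
  have hev : ∀ᶠ x in nhdsWithin r {r}ᶜ, Q.eval x < 0 :=
    (hc.eventually_lt_const h').filter_mono nhdsWithin_le_nhds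
  obtain ⟨x, hx1, hx2⟩ := (hev.and (eventually_mem_nhdsWithin)).exists
  exact absurd (h x hx2) (not_le.mpr hx1)

lemma sq_dvd_of_root {P : ℝ[X]} (hP : ∀ x, 0 ≤ P.eval x) {r : ℝ} (hr : P.eval r = 0) :
    (X - C r) ^ 2 ∣ P := by
  obtain ⟨Q, hQ⟩ := (dvd_iff_isRoot.mpr hr : (X - C r) ∣ P)
  have hQr : Q.eval r = 0 := by
    by_contra h'
    have hc : Filter.Tendsto (fun x => Q.eval x) (nhds r) (nhds (Q.eval r)) :=
      (Polynomial.continuous Q).continuousAt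
    rcases lt_or_gt_of_ne h' with hneg | hpos
    · have hev : ∀ᶠ x in nhdsWithin r (Set.Ioi r), Q.eval x < 0 :=
        (hc.eventually_lt_const hneg).filter_mono nhdsWithin_le_nhds
      obtain ⟨x, hx1, hx2⟩ := (hev.and (eventually_mem_nhdsWithin)).exists
      have hxr : r < x := hx2
      have : P.eval x < 0 := by
        rw [hQ]; simp only [eval_mul, eval_sub, eval_X, eval_C]
        exact mul_neg_of_pos_of_neg (by linarith) hx1
      exact absurd (hP x) (not_le.mpr this)
    · have hev : ∀ᶠ x in nhdsWithin r (Set.Iio r), 0 < Q.eval x :=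
        (hc.eventually_const_lt hpos).filter_mono nhdsWithin_le_nhds
      obtain ⟨x, hx1, hx2⟩ := (hev.and (eventually_mem_nhdsWithin)).exists
      have hxr : x < r := hx2
      have : P.eval x < 0 := by
        rw [hQ]; simp only [eval_mul, eval_sub, eval_X, eval_C]
        exact mul_neg_of_neg_of_pos (by linarith) hx1
      exact absurd (hP x) (not_le.mpr this)
  obtain ⟨Q', hQ'⟩ := (dvd_iff_isRoot.mpr hQr : (X - C r) ∣ Q)
  exact ⟨Q', by rw [hQ, hQ']; ring⟩

lemma exists_sum_two_sq : ∀ (n : ℕ) (P : ℝ[X]), P.natDegree ≤ n → (∀ x, 0 ≤ P.eval x) →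
    ∃ A B : ℝ[X], P = A ^ 2 + B ^ 2 := by
  intro n
  induction n using Nat.strong_induction_on with
  | _ n ih =>
  intro P hdeg hP
  rcases Nat.eq_zero_or_pos P.natDegree with h0 | hdpos
  · have hc : 0 ≤ P.coeff 0 := by
      have := hP 0
      rwa [Polynomial.eq_C_of_natDegree_eq_zero h0, eval_C] at this
    have key : C (P.coeff 0) = (C (Real.sqrt (P.coeff 0))) ^ 2 + 0 ^ 2 := by
      rw [← Polynomial.C_pow, Real.sq_sqrt hc]; ring
    exact ⟨C (Real.sqrt (P.coeff 0)), 0,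
      by nth_rewrite 1 [Polynomial.eq_C_of_natDegree_eq_zero h0]; exact key⟩
  · have hPne : P ≠ 0 := fun h => by simp [h] at hdpos
    have hdegC : 0 < (P.map (algebraMap ℝ ℂ)).degree := by
      rw [Polynomial.degree_map]
      exact lt_of_lt_of_le (by exact_mod_cast hdpos)
        (Polynomial.le_degree_of_ne_zero (Polynomial.coeff_ne_zero_of_eq_degree
          (Polynomial.degree_eq_natDegree hPne)))
    obtain ⟨z, hz⟩ := Complex.exists_root hdegC
    have hz' : Polynomial.aeval z P = 0 := by
      rw [Polynomial.aeval_def, ← Polynomial.eval_map]; exact hz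
    rcases eq_or_ne z.im 0 with him | him
    · -- real root
      lift z to ℝ using him with r hr
      have hroot : P.eval r = 0 := by
        erw [Polynomial.aeval_ofReal, Complex.ofReal_eq_zero] at hz'
        simpa using hz'
      obtain ⟨Q, hQ⟩ := sq_dvd_of_root hP hroot
      have hQnn : ∀ x, 0 ≤ Q.eval x := by
        have haux : ∀ y, y ≠ r → 0 ≤ Q.eval y := by
          intro y hy
          have h1 : 0 ≤ P.eval y := hP y
          rw [hQ] at h1
          simp only [eval_mul, eval_pow, eval_sub, eval_X, eval_C] at h1
          have h2 : 0 < (y - r) ^ 2 :=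
            lt_of_le_of_ne (sq_nonneg _) (Ne.symm (pow_ne_zero 2 (sub_ne_zero.mpr hy)))
          nlinarith
        intro x
        rcases eq_or_ne x r with rfl | hx
        · exact eval_nonneg_of_nonneg_compl haux
        · exact haux x hx
      have hQne : Q ≠ 0 := fun h => hPne (by rw [hQ, h, mul_zero])
      have hXne : ((X - C r) ^ 2 : ℝ[X]) ≠ 0 := pow_ne_zero 2 (X_sub_C_ne_zero r)
      have hdQ : Q.natDegree + 2 = P.natDegree := by
        rw [hQ, Polynomial.natDegree_mul hXne hQne]
        rw [Polynomial.natDegree_pow, Polynomial.natDegree_X_sub_C]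
        ring
      obtain ⟨A, B, hAB⟩ := ih Q.natDegree (by omega) Q le_rfl hQnn
      exact ⟨(X - C r) * A, (X - C r) * B, by rw [hQ, hAB]; ring⟩
    · -- complex root
      obtain ⟨Q, hQ⟩ := Polynomial.quadratic_dvd_of_aeval_eq_zero_im_ne_zero P hz' him
      have hqid : X ^ 2 - C (2 * z.re) * X + C (‖z‖ ^ 2) =
          (X - C z.re) ^ 2 + C (z.im) ^ 2 := by
        have hn : ‖z‖ ^ 2 = z.re ^ 2 + z.im ^ 2 := by
          rw [Complex.sq_norm, Complex.normSq_apply]; ring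
        rw [hn, Polynomial.C_add, Polynomial.C_pow, Polynomial.C_pow, Polynomial.C_mul]
        simp only [_root_.map_ofNat]
        ring
      have hqpos : ∀ x : ℝ, 0 < ((X - C z.re) ^ 2 + C (z.im) ^ 2).eval x := by
        intro x
        simp only [eval_add, eval_pow, eval_sub, eval_X, eval_C]
        have : z.im ^ 2 > 0 :=
          lt_of_le_of_ne (sq_nonneg _) (Ne.symm (pow_ne_zero 2 him))
        nlinarith [sq_nonneg (x - z.re)]
      rw [hqid] at hQ
      have hQnn : ∀ x, 0 ≤ Q.eval x := by
        intro x
        have h1 : 0 ≤ P.eval x := hP x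
        rw [hQ, eval_mul] at h1
        nlinarith [hqpos x]
      have hqne : ((X - C z.re) ^ 2 + C (z.im) ^ 2) ≠ 0 := fun h => by
        have := hqpos 0; rw [h] at this; simp at this
      have hQne : Q ≠ 0 := fun h => hPne (by rw [hQ, h, mul_zero])
      have hdq : ((X - C z.re) ^ 2 + C (z.im) ^ 2).natDegree = 2 := by
        compute_degree!
      have hdQ : Q.natDegree + 2 = P.natDegree := by
        rw [hQ, Polynomial.natDegree_mul hqne hQne, hdq]; ring
      obtain ⟨A, B, hAB⟩ := ih Q.natDegree (by omega) Q le_rfl hQnn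
      exact ⟨(X - C z.re) * A - C z.im * B, (X - C z.re) * B + C z.im * A, by
        rw [hQ, hAB]; ring⟩

lemma natDegree_sq_le_of_sos {A B P : ℝ[X]} (h : P = A ^ 2 + B ^ 2) :
    2 * A.natDegree ≤ P.natDegree := by
  by_contra h'
  push_neg at h'
  have hA : A ≠ 0 := by
    intro h0
    rw [h0] at h'
    simp only [Polynomial.natDegree_zero, Nat.mul_zero] at h'
    omega
  set d := max (2 * A.natDegree) (2 * B.natDegree) with hd
  have hdP : P.natDegree < d := lt_of_lt_of_le h' (le_max_left _ _)
  have hPc : P.coeff d = 0 := Polynomial.coeff_eq_zero_of_natDegree_lt hdP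
  have hcoeffs : ∀ W : ℝ[X], 2 * W.natDegree ≤ d →
      (W ^ 2).coeff d = if 2 * W.natDegree = d then W.leadingCoeff ^ 2 else 0 := by
    intro W hW
    have hnd : (W ^ 2).natDegree = 2 * W.natDegree := by
      rw [Polynomial.natDegree_pow]
    by_cases hcase : 2 * W.natDegree = d
    · rw [if_pos hcase, ← hcase, ← hnd, Polynomial.coeff_natDegree, Polynomial.leadingCoeff_pow]
    · rw [if_neg hcase]
      exact Polynomial.coeff_eq_zero_of_natDegree_lt (by omega)
  have hsum : (A ^ 2).coeff d + (B ^ 2).coeff d = 0 := by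
    rw [← Polynomial.coeff_add, ← h]
    exact hPc
  have hAc := hcoeffs A (le_max_left _ _)
  have hBc := hcoeffs B (le_max_right _ _)
  by_cases hAd : 2 * A.natDegree = d
  · rw [hAc, if_pos hAd] at hsum
    have h1 : 0 < A.leadingCoeff ^ 2 :=
      lt_of_le_of_ne (sq_nonneg _) (Ne.symm (pow_ne_zero _ (Polynomial.leadingCoeff_ne_zero.mpr hA)))
    have h2 : (0:ℝ) ≤ (B ^ 2).coeff d := by
      rw [hBc]
      split
      · exact sq_nonneg _
      · exact le_refl _
    linarith
  · have hBd : 2 * B.natDegree = d := by omega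
    rw [hBc, if_pos hBd, hAc, if_neg hAd, zero_add] at hsum
    have hB : B ≠ 0 := by
      intro h0
      rw [h0] at hBd
      simp only [Polynomial.natDegree_zero, Nat.mul_zero] at hBd
      omega
    exact (pow_ne_zero _ (Polynomial.leadingCoeff_ne_zero.mpr hB)) hsum
lemma sumFin2 (w : Fin 2 →₀ ℕ) : (w.sum fun _ n => n) = w 0 + w 1 := by
  rw [Finsupp.sum_fintype]
  · exact Fin.sum_univ_two _
  · intro i; rfl

lemma sum_single2 (a b : ℕ) :
    ((Finsupp.single (0 : Fin 2) a + Finsupp.single 1 b).sum fun _ n => n) = a + b := by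
  rw [sumFin2]
  simp [Finsupp.single_apply]

lemma totalDegree_yxl_mul {l : ℕ} (hl : 1 ≤ l) {t : MvPolynomial (Fin 2) ℝ} (ht : t ≠ 0) :
    t.totalDegree + (l + 1) ≤ (yxlMinusOne l * t).totalDegree := by
  classical
  set e : Fin 2 →₀ ℕ := Finsupp.single 0 l + Finsupp.single 1 1 with he
  have hesum : (e.sum fun _ n => n) = l + 1 := sum_single2 l 1
  have hmon : (MvPolynomial.X 1 * MvPolynomial.X 0 ^ l : MvPolynomial (Fin 2) ℝ)
      = MvPolynomial.monomial e 1 := by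
    have h1 : (MvPolynomial.X 1 : MvPolynomial (Fin 2) ℝ)
        = MvPolynomial.monomial (Finsupp.single 1 1) 1 := by
      rw [← MvPolynomial.X_pow_eq_monomial, pow_one]
    have h2 : (MvPolynomial.X 0 ^ l : MvPolynomial (Fin 2) ℝ)
        = MvPolynomial.monomial (Finsupp.single 0 l) 1 := MvPolynomial.X_pow_eq_monomial
    rw [he, h1, h2, MvPolynomial.monomial_mul, one_mul, add_comm]
  -- pick top monomial of t
  have hne : t.support.Nonempty := by
    rw [Finset.nonempty_iff_ne_empty, Ne, MvPolynomial.support_eq_empty]; exact ht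
  obtain ⟨m, hm, hms⟩ := Finset.exists_mem_eq_sup t.support hne (fun s => s.sum fun _ n => n)
  have hmdeg : (m.sum fun _ n => n) = t.totalDegree := by
    rw [MvPolynomial.totalDegree, hms]
  have hcoeff : MvPolynomial.coeff (m + e) (yxlMinusOne l * t) = MvPolynomial.coeff m t := by
    have hst : yxlMinusOne l * t = t * MvPolynomial.monomial e 1 - t := by
      rw [yxlMinusOne, ← hmon]; ring
    rw [hst, MvPolynomial.coeff_sub, MvPolynomial.coeff_mul_monomial, mul_one]
    have h0 : MvPolynomial.coeff (m + e) t = 0 := by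
      by_contra h
      have hmem : m + e ∈ t.support := MvPolynomial.mem_support_iff.mpr h
      have := MvPolynomial.le_totalDegree hmem
      rw [Finsupp.sum_add_index' (fun _ => rfl) (fun _ _ _ => rfl), hesum, hmdeg] at this
      omega
    rw [h0, sub_zero]
  have hmem : m + e ∈ (yxlMinusOne l * t).support := by
    rw [MvPolynomial.mem_support_iff, hcoeff]
    exact MvPolynomial.mem_support_iff.mp hm
  have := MvPolynomial.le_totalDegree hmem
  rwa [Finsupp.sum_add_index' (fun _ => rfl) (fun _ _ _ => rfl), hesum, hmdeg] at this

/-- the two "half" exponents of a monomial -/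
def half1 (m : Fin 2 →₀ ℕ) : Fin 2 →₀ ℕ :=
  Finsupp.single 0 (min (m 0) ((m 0 + m 1 + 1) / 2)) +
    Finsupp.single 1 ((m 0 + m 1 + 1) / 2 - min (m 0) ((m 0 + m 1 + 1) / 2))

def half2 (m : Fin 2 →₀ ℕ) : Fin 2 →₀ ℕ :=
  Finsupp.single 0 (m 0 - min (m 0) ((m 0 + m 1 + 1) / 2)) +
    Finsupp.single 1 (m 1 - ((m 0 + m 1 + 1) / 2 - min (m 0) ((m 0 + m 1 + 1) / 2)))

lemma half_add (m : Fin 2 →₀ ℕ) : half1 m + half2 m = m := by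
  ext i
  fin_cases i <;>
    simp only [half1, half2, Finsupp.add_apply, Finsupp.single_apply] <;> simp <;> omega

lemma half1_sum (m : Fin 2 →₀ ℕ) : ((half1 m).sum fun _ n => n) * 2 ≤ m 0 + m 1 + 1 := by
  rw [half1, sum_single2]; omega

lemma half2_sum (m : Fin 2 →₀ ℕ) : ((half2 m).sum fun _ n => n) * 2 ≤ m 0 + m 1 + 1 := by
  rw [half2, sum_single2]; omega


set_option maxHeartbeats 1000000 in
/-- Positivstellensatz on the curve `y x^ℓ = 1`. -/
theorem statement9 (l : ℕ) (hl : 2 ≤ l) (k : ℕ) (hk : l + 1 ≤ k)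
    (r : MvPolynomial (Fin 2) ℝ) (hdeg : r.totalDegree ≤ 2 * k)
    (hpos : ∀ x y : ℝ, y * x ^ l = 1 → 0 < MvPolynomial.eval ![x, y] r) :
    ∃ (l₁ l₂ l₃ : ℕ) (f : Fin l₁ → MvPolynomial (Fin 2) ℝ)
      (g : Fin l₂ → MvPolynomial (Fin 2) ℝ) (h : Fin l₃ → MvPolynomial (Fin 2) ℝ),
      r = (∑ i, (f i) ^ 2) + yxlMinusOne l * (∑ i, (g i) ^ 2)
            - yxlMinusOne l * (∑ i, (h i) ^ 2) ∧
      (∀ i, ((f i) ^ 2).totalDegree ≤ 2 * (k + l + 1)) ∧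
      (∀ i, (yxlMinusOne l * (g i) ^ 2).totalDegree ≤ 2 * (k + l + 1)) ∧
      (∀ i, (yxlMinusOne l * (h i) ^ 2).totalDegree ≤ 2 * (k + l + 1)) := by
  classical
  have hl0 : 0 < l := by omega
  -- quotient setup
  set I : Ideal (MvPolynomial (Fin 2) ℝ) := Ideal.span {yxlMinusOne l} with hI
  set π : MvPolynomial (Fin 2) ℝ →+* MvPolynomial (Fin 2) ℝ ⧸ I := Ideal.Quotient.mk I with hπ
  set u := π (MvPolynomial.X 0) with hu
  set v := π (MvPolynomial.X 1) with hv
  have hs0 : π (yxlMinusOne l) = 0 :=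
    Ideal.Quotient.eq_zero_iff_mem.mpr (Ideal.subset_span rfl)
  have huv : v * u ^ l = 1 := by
    have h1 : π (MvPolynomial.X 1 * MvPolynomial.X 0 ^ l - 1) = 0 := hs0
    rw [_root_.map_sub, _root_.map_mul, _root_.map_pow, _root_.map_one, sub_eq_zero] at h1
    exact h1
  have key : ∀ a b c d : ℕ, b + l * c = d + l * a → v ^ a * u ^ b = v ^ c * u ^ d := by
    intro a b c d hbal
    calc v ^ a * u ^ b = v ^ a * u ^ b * (v * u ^ l) ^ c := by rw [huv, one_pow, mul_one]
      _ = v ^ (a + c) * u ^ (b + l * c) := by rw [mul_pow, ← pow_mul]; ring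
      _ = v ^ (c + a) * u ^ (d + l * a) := by rw [hbal, add_comm a c]
      _ = v ^ c * u ^ d * (v * u ^ l) ^ a := by rw [mul_pow, ← pow_mul]; ring
      _ = v ^ c * u ^ d := by rw [huv, one_pow, mul_one]
  -- support bounds for r
  have hm01 : ∀ m ∈ r.support, m 0 + m 1 ≤ 2 * k := by
    intro m hm
    have h1 := MvPolynomial.le_totalDegree hm
    rw [sumFin2] at h1
    omega
  -- the univariate polynomial P
  set eE : (Fin 2 →₀ ℕ) → ℕ := fun m => 2 * l * k + m 0 - l * m 1 with heE
  have heP : ∀ m ∈ r.support, eE m + l * m 1 = 2 * l * k + m 0 := by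
    intro m hm
    have h1 : l * m 1 ≤ 2 * l * k := by
      calc l * m 1 ≤ l * (2 * k) := Nat.mul_le_mul_left l (by have := hm01 m hm; omega)
        _ = 2 * l * k := by ring
    exact Nat.sub_add_cancel (le_trans h1 (Nat.le_add_right _ _))
  set P : ℝ[X] := ∑ m ∈ r.support, Polynomial.C (r.coeff m) * Polynomial.X ^ (eE m) with hP
  -- evaluation identity for P
  have hreval : ∀ x y : ℝ, MvPolynomial.eval ![x, y] r
      = ∑ m ∈ r.support, r.coeff m * (x ^ m 0 * y ^ m 1) := by
    intro x y
    conv_lhs => rw [← MvPolynomial.support_sum_monomial_coeff r]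
    rw [_root_.map_sum]
    refine Finset.sum_congr rfl fun m hm => ?_
    rw [MvPolynomial.eval_monomial]
    congr 1
    rw [Finsupp.prod_fintype _ _ (fun i => pow_zero _), Fin.prod_univ_two]
    simp
  have hPeval : ∀ x y : ℝ, x ≠ 0 → y * x ^ l = 1 →
      Polynomial.eval x P = x ^ (2 * l * k) * MvPolynomial.eval ![x, y] r := by
    intro x y hx hy
    rw [hP, Polynomial.eval_finset_sum, hreval, Finset.mul_sum]
    refine Finset.sum_congr rfl fun m hm => ?_
    simp only [Polynomial.eval_mul, Polynomial.eval_C, Polynomial.eval_pow, Polynomial.eval_X]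
    have hxe : x ^ (eE m) * x ^ (l * m 1) = x ^ (2 * l * k) * x ^ (m 0) := by
      rw [← pow_add, ← pow_add, heP m hm]
    have hxl : y ^ m 1 * (x ^ l) ^ m 1 = 1 := by rw [← mul_pow, hy, one_pow]
    have hne : (x ^ l) ^ m 1 ≠ 0 := pow_ne_zero _ (pow_ne_zero _ hx)
    apply mul_right_cancel₀ hne
    calc r.coeff m * x ^ eE m * (x ^ l) ^ m 1
        = r.coeff m * (x ^ eE m * x ^ (l * m 1)) := by rw [pow_mul]; ring
      _ = r.coeff m * (x ^ (2 * l * k) * x ^ (m 0)) := by rw [hxe]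
      _ = (x ^ (2 * l * k) * (r.coeff m * (x ^ m 0 * y ^ m 1))) * (x ^ l) ^ m 1 := by
          rw [show (x ^ (2 * l * k) * (r.coeff m * (x ^ m 0 * y ^ m 1))) * (x ^ l) ^ m 1
              = r.coeff m * (x ^ (2 * l * k) * x ^ (m 0)) * (y ^ m 1 * (x ^ l) ^ m 1) by ring,
            hxl, mul_one]
  -- nonnegativity of P
  have hPnn : ∀ x : ℝ, 0 ≤ Polynomial.eval x P := by
    have haux : ∀ x : ℝ, x ≠ 0 → 0 ≤ Polynomial.eval x P := by
      intro x hx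
      have hy : (x ^ l)⁻¹ * x ^ l = 1 := inv_mul_cancel₀ (pow_ne_zero l hx)
      rw [hPeval x ((x ^ l)⁻¹) hx hy]
      have h1 : (0:ℝ) < x ^ (2 * l * k) := by
        have h2 : x ^ (2 * l * k) = (x ^ (l * k)) ^ 2 := by rw [← pow_mul]; congr 1; ring
        rw [h2]
        exact lt_of_le_of_ne (sq_nonneg _) (Ne.symm (pow_ne_zero 2 (pow_ne_zero _ hx)))
      exact le_of_lt (mul_pos h1 (hpos x ((x ^ l)⁻¹) hy))
    intro x
    rcases eq_or_ne x 0 with rfl | hx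
    · exact eval_nonneg_of_nonneg_compl fun y hy => haux y hy
    · exact haux x hx
  obtain ⟨A, B, hAB⟩ := exists_sum_two_sq P.natDegree P le_rfl hPnn
  -- degree bounds for P, A, B
  have hndP : P.natDegree ≤ 2 * (l * k) + 2 * k := by
    rw [hP]
    refine Polynomial.natDegree_sum_le_of_forall_le _ _ fun m hm => ?_
    refine le_trans (Polynomial.natDegree_C_mul_le _ _) ?_
    rw [Polynomial.natDegree_X_pow]
    have h1 := hm01 m hm
    have h2 : eE m ≤ 2 * l * k + m 0 := Nat.sub_le _ _
    have h3 : 2 * l * k = 2 * (l * k) := by ring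
    omega
  have hndA : A.natDegree ≤ l * k + k := by
    have := natDegree_sq_le_of_sos hAB
    linarith
  have hndB : B.natDegree ≤ l * k + k := by
    have := natDegree_sq_le_of_sos (hAB.trans (add_comm _ _))
    linarith
  -- monomial reduction
  set red : ℕ → MvPolynomial (Fin 2) ℝ := fun j =>
    if l * k ≤ j then MvPolynomial.X 0 ^ (j - l * k)
    else MvPolynomial.X 1 ^ (k - j / l) * MvPolynomial.X 0 ^ (j % l) with hredd
  have hred_pi : ∀ j : ℕ, π (red j) = v ^ k * u ^ j := by
    intro j
    rw [hredd]
    by_cases hj : l * k ≤ j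
    · simp only [hj, if_true]
      rw [_root_.map_pow, ← hu]
      have h1 := key 0 (j - l * k) k j (by omega)
      rw [pow_zero, one_mul] at h1
      exact h1
    · simp only [hj, if_false]
      rw [_root_.map_mul, _root_.map_pow, _root_.map_pow, ← hu, ← hv]
      refine key (k - j / l) (j % l) k j ?_
      have hq : j / l < k := Nat.div_lt_of_lt_mul (by omega)
      have h1 : l * (k - j / l) + l * (j / l) = l * k := by
        rw [← Nat.mul_add]
        congr 1
        omega
      have h2 := Nat.mod_add_div j l
      linarith
  have hred_deg : ∀ j : ℕ, j ≤ l * k + k → (red j).totalDegree ≤ k + l := by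
    intro j hj
    rw [hredd]
    by_cases hjc : l * k ≤ j
    · simp only [hjc, if_true]
      rw [MvPolynomial.totalDegree_X_pow]
      omega
    · simp only [hjc, if_false]
      refine le_trans (MvPolynomial.totalDegree_mul _ _) ?_
      rw [MvPolynomial.totalDegree_X_pow, MvPolynomial.totalDegree_X_pow]
      have h4 := Nat.mod_lt j hl0
      have h5 : k - j / l ≤ k := Nat.sub_le _ _
      omega
  -- the reduced polynomials
  set F : ℝ[X] → MvPolynomial (Fin 2) ℝ := fun W =>
    ∑ j ∈ Finset.range (W.natDegree + 1), MvPolynomial.C (W.coeff j) * red j with hF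
  have hF_pi : ∀ W : ℝ[X],
      π (F W) = v ^ k * π (Polynomial.aeval (MvPolynomial.X 0) W) := by
    intro W
    conv_rhs => rw [Polynomial.as_sum_range' W (W.natDegree + 1) (Nat.lt_succ_self _)]
    simp only [hF, _root_.map_sum, Finset.mul_sum]
    refine Finset.sum_congr rfl fun j hj => ?_
    rw [_root_.map_mul, Polynomial.aeval_monomial, MvPolynomial.algebraMap_eq, _root_.map_mul, _root_.map_pow,
      hred_pi j, ← hu]
    ring
  have hF_deg : ∀ W : ℝ[X], W.natDegree ≤ l * k + k → (F W).totalDegree ≤ k + l := by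
    intro W hW
    rw [hF]
    refine le_trans (MvPolynomial.totalDegree_finset_sum _ _) ?_
    refine Finset.sup_le fun j hj => ?_
    refine le_trans (MvPolynomial.totalDegree_mul _ _) ?_
    rw [MvPolynomial.totalDegree_C, zero_add]
    refine hred_deg j ?_
    rw [Finset.mem_range] at hj
    omega
  -- r ≡ (F A)^2 + (F B)^2  mod I
  have hmono : ∀ (m : Fin 2 →₀ ℕ) (c : ℝ), (MvPolynomial.monomial m c : MvPolynomial (Fin 2) ℝ)
      = MvPolynomial.C c * MvPolynomial.X 0 ^ (m 0) * MvPolynomial.X 1 ^ (m 1) := by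
    intro m c
    rw [MvPolynomial.monomial_eq]
    rw [Finsupp.prod_fintype _ _ (fun i => pow_zero _), Fin.prod_univ_two]
    ring
  have hπr : π r = v ^ (2 * k) * π (Polynomial.aeval (MvPolynomial.X 0) P) := by
    conv_lhs => rw [← MvPolynomial.support_sum_monomial_coeff r]
    rw [hP]
    simp only [_root_.map_sum, Finset.mul_sum]
    refine Finset.sum_congr rfl fun m hm => ?_
    have hkey := key (2 * k) (eE m) (m 1) (m 0) (by rw [heP m hm]; ring)
    rw [hmono, _root_.map_mul, _root_.map_mul, _root_.map_pow, _root_.map_pow, ← hu, ← hv]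
    rw [_root_.map_mul, Polynomial.aeval_C, MvPolynomial.algebraMap_eq, _root_.map_pow, Polynomial.aeval_X,
      _root_.map_mul, _root_.map_pow, ← hu]
    linear_combination (-(π (MvPolynomial.C (r.coeff m)))) * hkey
  have hπD : π (r - F A ^ 2 - F B ^ 2) = 0 := by
    rw [_root_.map_sub, _root_.map_sub, _root_.map_pow, _root_.map_pow, hF_pi, hF_pi, hπr, hAB]
    simp only [_root_.map_add, _root_.map_pow]
    ring
  obtain ⟨t, ht⟩ : ∃ t, r - F A ^ 2 - F B ^ 2 = yxlMinusOne l * t := by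
    have hmem : r - F A ^ 2 - F B ^ 2 ∈ I := Ideal.Quotient.eq_zero_iff_mem.mp hπD
    rw [hI, Ideal.mem_span_singleton] at hmem
    obtain ⟨t, ht⟩ := hmem
    exact ⟨t, ht⟩
  have hdegFA : (F A).totalDegree ≤ k + l := hF_deg A hndA
  have hdegFB : (F B).totalDegree ≤ k + l := hF_deg B hndB
  have hdegD : (r - F A ^ 2 - F B ^ 2).totalDegree ≤ 2 * k + 2 * l := by
    refine le_trans (MvPolynomial.totalDegree_sub _ _) ?_
    refine max_le (le_trans (MvPolynomial.totalDegree_sub _ _) (max_le ?_ ?_)) ?_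
    · omega
    · refine le_trans (MvPolynomial.totalDegree_pow _ _) ?_
      omega
    · refine le_trans (MvPolynomial.totalDegree_pow _ _) ?_
      omega
  have hsupt : ∀ m ∈ t.support, m 0 + m 1 + (l + 1) ≤ 2 * k + 2 * l := by
    intro m hm
    have ht0 : t ≠ 0 := by
      intro h0
      rw [h0] at hm
      simp at hm
    have h1 := MvPolynomial.le_totalDegree hm
    rw [sumFin2] at h1
    have h2 := totalDegree_yxl_mul (show 1 ≤ l by omega) ht0
    rw [← ht] at h2
    have h3 := hdegD
    omega
  -- the g/h construction
  set gO : (Fin 2 →₀ ℕ) → MvPolynomial (Fin 2) ℝ := fun m =>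
    MvPolynomial.C (1/2) * (MvPolynomial.monomial (half1 m) (t.coeff m)
      + MvPolynomial.monomial (half2 m) 1) with hgO
  set hO : (Fin 2 →₀ ℕ) → MvPolynomial (Fin 2) ℝ := fun m =>
    MvPolynomial.C (1/2) * (MvPolynomial.monomial (half1 m) (t.coeff m)
      - MvPolynomial.monomial (half2 m) 1) with hhO
  have hc4 : (MvPolynomial.C (1/2 : ℝ) : MvPolynomial (Fin 2) ℝ) ^ 2 * 4 = 1 := by
    rw [← _root_.map_ofNat (MvPolynomial.C : ℝ →+* MvPolynomial (Fin 2) ℝ) 4,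
      ← MvPolynomial.C_pow, ← MvPolynomial.C_mul]
    norm_num
  have hgh : ∀ m, gO m ^ 2 - hO m ^ 2 = MvPolynomial.monomial m (t.coeff m) := by
    intro m
    rw [hgO, hhO]
    have hpq : MvPolynomial.monomial (half1 m) (t.coeff m)
        * MvPolynomial.monomial (half2 m) (1:ℝ) = MvPolynomial.monomial m (t.coeff m) := by
      rw [MvPolynomial.monomial_mul, mul_one, half_add]
    calc (MvPolynomial.C (1/2) * (MvPolynomial.monomial (half1 m) (t.coeff m)
            + MvPolynomial.monomial (half2 m) 1)) ^ 2
          - (MvPolynomial.C (1/2) * (MvPolynomial.monomial (half1 m) (t.coeff m)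
            - MvPolynomial.monomial (half2 m) 1)) ^ 2
        = (MvPolynomial.C (1/2 : ℝ) ^ 2 * 4) * (MvPolynomial.monomial (half1 m) (t.coeff m)
            * MvPolynomial.monomial (half2 m) 1) := by ring
      _ = MvPolynomial.monomial m (t.coeff m) := by rw [hc4, one_mul, hpq]
  have hg_deg : ∀ m, 2 * (gO m).totalDegree ≤ m 0 + m 1 + 1 := by
    intro m
    have h1 : (gO m).totalDegree ≤ max ((half1 m).sum fun _ n => n) ((half2 m).sum fun _ n => n) := by
      rw [hgO]
      refine le_trans (MvPolynomial.totalDegree_mul _ _) ?_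
      rw [MvPolynomial.totalDegree_C, zero_add]
      refine le_trans (MvPolynomial.totalDegree_add _ _) ?_
      exact max_le_max (MvPolynomial.totalDegree_monomial_le _ _)
        (MvPolynomial.totalDegree_monomial_le _ _)
    have h2 := half1_sum m
    have h3 := half2_sum m
    omega
  have hh_deg : ∀ m, 2 * (hO m).totalDegree ≤ m 0 + m 1 + 1 := by
    intro m
    have h1 : (hO m).totalDegree ≤ max ((half1 m).sum fun _ n => n) ((half2 m).sum fun _ n => n) := by
      rw [hhO]
      refine le_trans (MvPolynomial.totalDegree_mul _ _) ?_
      rw [MvPolynomial.totalDegree_C, zero_add]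
      refine le_trans (MvPolynomial.totalDegree_sub _ _) ?_
      exact max_le_max (MvPolynomial.totalDegree_monomial_le _ _)
        (MvPolynomial.totalDegree_monomial_le _ _)
    have h2 := half1_sum m
    have h3 := half2_sum m
    omega
  have hsdeg : (yxlMinusOne l).totalDegree ≤ l + 1 := by
    rw [yxlMinusOne]
    refine le_trans (MvPolynomial.totalDegree_sub _ _) ?_
    refine max_le (le_trans (MvPolynomial.totalDegree_mul _ _) ?_) ?_
    · rw [MvPolynomial.totalDegree_X, MvPolynomial.totalDegree_X_pow]
      omega
    · rw [MvPolynomial.totalDegree_one]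
      omega
  -- assembling
  set eqv := t.support.equivFin with heqv
  refine ⟨2, t.support.card, t.support.card, ![F A, F B],
    fun i => gO (eqv.symm i), fun i => hO (eqv.symm i), ?_, ?_, ?_, ?_⟩
  · -- the identity
    have hSig : (∑ i : Fin t.support.card, gO (eqv.symm i) ^ 2)
        - (∑ i : Fin t.support.card, hO (eqv.symm i) ^ 2) = t := by
      rw [← Finset.sum_sub_distrib]
      have e1 : ∑ i : Fin t.support.card, (gO ((eqv.symm i : Fin 2 →₀ ℕ)) ^ 2
            - hO ((eqv.symm i : Fin 2 →₀ ℕ)) ^ 2)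
          = ∑ x : {x // x ∈ t.support}, (gO (x : Fin 2 →₀ ℕ) ^ 2 - hO (x : Fin 2 →₀ ℕ) ^ 2) :=
        Equiv.sum_comp eqv.symm
          (fun x : {x // x ∈ t.support} => gO (x : Fin 2 →₀ ℕ) ^ 2 - hO (x : Fin 2 →₀ ℕ) ^ 2)
      rw [e1, Finset.sum_coe_sort t.support (fun m => gO m ^ 2 - hO m ^ 2)]
      calc ∑ m ∈ t.support, (gO m ^ 2 - hO m ^ 2)
          = ∑ m ∈ t.support, MvPolynomial.monomial m (t.coeff m) :=
            Finset.sum_congr rfl fun m _ => hgh m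
        _ = t := MvPolynomial.support_sum_monomial_coeff t
    have hfin2 : (∑ i : Fin 2, (![F A, F B] i) ^ 2) = F A ^ 2 + F B ^ 2 := by
      rw [Fin.sum_univ_two]
      simp
    rw [hfin2]
    linear_combination ht - yxlMinusOne l * hSig
  · intro i
    have hFA2 : ((F A) ^ 2).totalDegree ≤ 2 * (k + l + 1) :=
      le_trans (MvPolynomial.totalDegree_pow _ _) (by omega)
    have hFB2 : ((F B) ^ 2).totalDegree ≤ 2 * (k + l + 1) :=
      le_trans (MvPolynomial.totalDegree_pow _ _) (by omega)
    fin_cases i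
    · simpa using hFA2
    · simpa using hFB2
  · intro i
    beta_reduce
    have hm : (eqv.symm i : Fin 2 →₀ ℕ) ∈ t.support := (eqv.symm i).2
    refine le_trans (MvPolynomial.totalDegree_mul _ _) ?_
    have h2 := hg_deg (eqv.symm i : Fin 2 →₀ ℕ)
    have h3 := hsupt _ hm
    have h4 : ((gO (eqv.symm i : Fin 2 →₀ ℕ)) ^ 2).totalDegree
        ≤ 2 * (gO (eqv.symm i : Fin 2 →₀ ℕ)).totalDegree := MvPolynomial.totalDegree_pow _ _
    omega
  · intro i
    beta_reduce
    have hm : (eqv.symm i : Fin 2 →₀ ℕ) ∈ t.support := (eqv.symm i).2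
    refine le_trans (MvPolynomial.totalDegree_mul _ _) ?_
    have h2 := hh_deg (eqv.symm i : Fin 2 →₀ ℕ)
    have h3 := hsupt _ hm
    have h4 : ((hO (eqv.symm i : Fin 2 →₀ ℕ)) ^ 2).totalDegree
        ≤ 2 * (hO (eqv.symm i : Fin 2 →₀ ℕ)).totalDegree := MvPolynomial.totalDegree_pow _ _
    omega


end AuxSOS

end TMP
end
end

section
/- Let β = β^{(2k−1)} be a real 2-dimensional sequence of degree 2k−1, let a,b,c,d,e,f ∈ ℝ with bf − ce ≠ 0, let φ(x,y) = (a+bx+cy, d+ex+fy) and let β̃ be the 2-dimensional sequence of degree 2k−1 defined by β̃_{i,j} = L_β((a+bx+cy)^i (d+ex+fy)^j). Then: (1) M_k(β) is psd completable if and only if M_k(β̃) is psd completable; (2) for every r ∈ ℕ, there exists an extension β^{(2k)} of β with rank M_k(β^{(2k)}) = r if and only if there exists an extension β̃^{(2k)} of β̃ with rank M_k(β̃^{(2k)}) = r; (3) there exists an extension β^{(2k)} of β such that M_k(β^{(2k)}) is recursively generated if and only if there exists an extension β̃^{(2k)} of β̃ such that M_k(β̃^{(2k)}) is recursively generated; (4)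 for every r ∈ ℕ and every closed K ⊆ ℝ², β admits an r-atomic K-representing measure if and only if β̃ admits an r-atomic φ(K)-representing measure. -/
open MeasureTheory Matrix Finset

noncomputable section

namespace TMP

-- AUX


lemma finsupp_fin2_ext {m n : Fin 2 →₀ ℕ} (h0 : m 0 = n 0) (h1 : m 1 = n 1) : m = n := by
  ext i; fin_cases i <;> assumption

lemma finsupp_fin2_eq (m : Fin 2 →₀ ℕ) :
    m = Finsupp.single 0 (m 0) + Finsupp.single 1 (m 1) := by
  apply finsupp_fin2_ext <;> simp [Finsupp.single_apply]

lemma monomial_eq_xy (m : Fin 2 →₀ ℕ) (r : ℝ) :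
    (MvPolynomial.monomial m r : MvPolynomial (Fin 2) ℝ) =
      MvPolynomial.C r * MvPolynomial.X 0 ^ (m 0) * MvPolynomial.X 1 ^ (m 1) := by
  rw [MvPolynomial.X_pow_eq_monomial, MvPolynomial.X_pow_eq_monomial,
    MvPolynomial.C_apply, MvPolynomial.monomial_mul, MvPolynomial.monomial_mul,
    mul_one, mul_one, zero_add]
  rw [← finsupp_fin2_eq]

lemma xy_pow_eq_monomial (i j : ℕ) :
    (MvPolynomial.X 0 ^ i * MvPolynomial.X 1 ^ j : MvPolynomial (Fin 2) ℝ) =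
      MvPolynomial.monomial (Finsupp.single 0 i + Finsupp.single 1 j) 1 := by
  rw [MvPolynomial.X_pow_eq_monomial, MvPolynomial.X_pow_eq_monomial,
    MvPolynomial.monomial_mul, mul_one]

lemma mem_support_deg {p : MvPolynomial (Fin 2) ℝ} {m : Fin 2 →₀ ℕ}
    (h : m ∈ p.support) : m 0 + m 1 ≤ p.totalDegree := by
  have := MvPolynomial.le_totalDegree h
  rwa [Finsupp.sum_fintype _ _ (fun _ => rfl), Fin.sum_univ_two] at this



lemma riesz_eq_sum {β : ℕ → ℕ → ℝ} {p : MvPolynomial (Fin 2) ℝ}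
    {s : Finset (Fin 2 →₀ ℕ)} (h : p.support ⊆ s) :
    riesz β p = ∑ m ∈ s, p.coeff m * β (m 0) (m 1) := by
  refine Finset.sum_subset h ?_
  intro m _ hm
  rw [MvPolynomial.notMem_support_iff.mp hm, zero_mul]

lemma riesz_zero (β : ℕ → ℕ → ℝ) : riesz β 0 = 0 := by
  simp [riesz]

lemma riesz_add (β : ℕ → ℕ → ℝ) (p q : MvPolynomial (Fin 2) ℝ) :
    riesz β (p + q) = riesz β p + riesz β q := by
  rw [riesz_eq_sum (s := p.support ∪ q.support) MvPolynomial.support_add,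
    riesz_eq_sum (s := p.support ∪ q.support) Finset.subset_union_left,
    riesz_eq_sum (s := p.support ∪ q.support) Finset.subset_union_right,
    ← Finset.sum_add_distrib]
  simp [MvPolynomial.coeff_add, add_mul]

lemma riesz_sum (β : ℕ → ℕ → ℝ) {ι : Type*} (s : Finset ι)
    (g : ι → MvPolynomial (Fin 2) ℝ) :
    riesz β (∑ i ∈ s, g i) = ∑ i ∈ s, riesz β (g i) := by
  classical
  induction s using Finset.induction_on with
  | empty => simp [riesz_zero]
  | @insert a s' ha ih => simp [Finset.sum_insert ha, riesz_add, ih]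

lemma riesz_C_mul (β : ℕ → ℕ → ℝ) (r : ℝ) (p : MvPolynomial (Fin 2) ℝ) :
    riesz β (MvPolynomial.C r * p) = r * riesz β p := by
  rcases eq_or_ne r 0 with rfl | hr
  · simp [riesz_zero]
  · have hs : (MvPolynomial.C r * p).support ⊆ p.support := by
      intro m hm
      rw [MvPolynomial.mem_support_iff] at hm ⊢
      intro h; rw [MvPolynomial.coeff_C_mul, h, mul_zero] at hm; exact hm rfl
    rw [riesz_eq_sum (s := p.support) hs, riesz, Finset.mul_sum]
    simp [MvPolynomial.coeff_C_mul, mul_assoc]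

lemma riesz_monomial (β : ℕ → ℕ → ℝ) (m : Fin 2 →₀ ℕ) (r : ℝ) :
    riesz β (MvPolynomial.monomial m r) = r * β (m 0) (m 1) := by
  rw [riesz_eq_sum (s := {m}) (MvPolynomial.support_monomial_subset)]
  simp


lemma aeval_expand (P1 P2 : MvPolynomial (Fin 2) ℝ) (u : MvPolynomial (Fin 2) ℝ) :
    MvPolynomial.aeval ![P1, P2] u =
      ∑ m ∈ u.support, MvPolynomial.C (u.coeff m) * P1 ^ (m 0) * P2 ^ (m 1) := by
  conv_lhs => rw [u.as_sum]
  rw [map_sum]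
  refine Finset.sum_congr rfl fun m _ => ?_
  rw [monomial_eq_xy]
  simp [MvPolynomial.algebraMap_eq]

lemma riesz_mul (β : ℕ → ℕ → ℝ) (p q : MvPolynomial (Fin 2) ℝ) :
    riesz β (p * q) = ∑ m ∈ p.support, ∑ n ∈ q.support,
      p.coeff m * q.coeff n * β (m 0 + n 0) (m 1 + n 1) := by
  conv_lhs => rw [p.as_sum, q.as_sum]
  rw [Finset.sum_mul_sum, riesz_sum]
  refine Finset.sum_congr rfl fun m _ => ?_
  rw [riesz_sum]
  refine Finset.sum_congr rfl fun n _ => ?_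
  rw [MvPolynomial.monomial_mul, riesz_monomial]
  simp [Finsupp.add_apply]

lemma riesz_congr {β β' : ℕ → ℕ → ℝ} {D : ℕ} (hext : ExtendsTo D β β')
    {p : MvPolynomial (Fin 2) ℝ} (hdeg : p.totalDegree ≤ D) :
    riesz β' p = riesz β p := by
  refine Finset.sum_congr rfl fun m hm => ?_
  rw [hext _ _ (le_trans (mem_support_deg hm) hdeg)]

lemma deg_P_le (a b c : ℝ) :
    (MvPolynomial.C a + MvPolynomial.C b * MvPolynomial.X 0 +
      MvPolynomial.C c * MvPolynomial.X 1 : MvPolynomial (Fin 2) ℝ).totalDegree ≤ 1 := by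
  refine le_trans (MvPolynomial.totalDegree_add _ _) (max_le ?_ ?_)
  · refine le_trans (MvPolynomial.totalDegree_add _ _) (max_le ?_ ?_)
    · simp [MvPolynomial.totalDegree_C]
    · refine le_trans (MvPolynomial.totalDegree_mul _ _) ?_
      simp [MvPolynomial.totalDegree_C, MvPolynomial.totalDegree_X]
  · refine le_trans (MvPolynomial.totalDegree_mul _ _) ?_
    simp [MvPolynomial.totalDegree_C, MvPolynomial.totalDegree_X]

lemma deg_aeval_le {P1 P2 : MvPolynomial (Fin 2) ℝ}
    (h1 : P1.totalDegree ≤ 1) (h2 : P2.totalDegree ≤ 1) (u : MvPolynomial (Fin 2) ℝ) :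
    (MvPolynomial.aeval ![P1, P2] u).totalDegree ≤ u.totalDegree := by
  rw [aeval_expand]
  refine le_trans (MvPolynomial.totalDegree_finset_sum _ _) (Finset.sup_le fun m hm => ?_)
  calc (MvPolynomial.C (u.coeff m) * P1 ^ (m 0) * P2 ^ (m 1)).totalDegree
      ≤ (MvPolynomial.C (u.coeff m) * P1 ^ (m 0)).totalDegree + (P2 ^ (m 1)).totalDegree :=
        MvPolynomial.totalDegree_mul _ _
    _ ≤ ((MvPolynomial.C (u.coeff m)).totalDegree + (P1 ^ (m 0)).totalDegree)
          + (P2 ^ (m 1)).totalDegree := by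
        exact Nat.add_le_add_right (MvPolynomial.totalDegree_mul _ _) _
    _ ≤ (0 + (m 0) * 1) + (m 1) * 1 := by
        refine add_le_add (add_le_add ?_ ?_) ?_
        · simp [MvPolynomial.totalDegree_C]
        · exact le_trans (MvPolynomial.totalDegree_pow _ _) (Nat.mul_le_mul_left _ h1)
        · exact le_trans (MvPolynomial.totalDegree_pow _ _) (Nat.mul_le_mul_left _ h2)
    _ ≤ u.totalDegree := by simpa using mem_support_deg hm

lemma deg_pow_mul_le {P1 P2 : MvPolynomial (Fin 2) ℝ}
    (h1 : P1.totalDegree ≤ 1) (h2 : P2.totalDegree ≤ 1) (i j : ℕ) :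
    (P1 ^ i * P2 ^ j).totalDegree ≤ i + j := by
  refine le_trans (MvPolynomial.totalDegree_mul _ _) (add_le_add ?_ ?_)
  · exact le_trans (MvPolynomial.totalDegree_pow _ _) (by simpa using Nat.mul_le_mul_left i h1)
  · exact le_trans (MvPolynomial.totalDegree_pow _ _) (by simpa using Nat.mul_le_mul_left j h2)

lemma riesz_X_pow (β : ℕ → ℕ → ℝ) (i j : ℕ) :
    riesz β (MvPolynomial.X 0 ^ i * MvPolynomial.X 1 ^ j) = β i j := by
  rw [xy_pow_eq_monomial, riesz_monomial]
  simp [Finsupp.single_apply]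

lemma vec_X_eq : (![MvPolynomial.X 0, MvPolynomial.X 1] : Fin 2 → MvPolynomial (Fin 2) ℝ) =
    MvPolynomial.X := by
  funext i; fin_cases i <;> rfl

lemma aeval_XX (t : MvPolynomial (Fin 2) ℝ) :
    MvPolynomial.aeval ![MvPolynomial.X 0, MvPolynomial.X 1] t = t := by
  rw [vec_X_eq, MvPolynomial.aeval_X_left_apply]

lemma riesz_transfer {D : ℕ} {β tβ : ℕ → ℕ → ℝ} {P1 P2 : MvPolynomial (Fin 2) ℝ}
    (htβ : ∀ i j, i + j ≤ D → tβ i j = riesz β (P1 ^ i * P2 ^ j))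
    {p : MvPolynomial (Fin 2) ℝ} (hdeg : p.totalDegree ≤ D) :
    riesz tβ p = riesz β (MvPolynomial.aeval ![P1, P2] p) := by
  rw [aeval_expand, riesz_sum, riesz]
  refine Finset.sum_congr rfl fun m hm => ?_
  rw [htβ _ _ (le_trans (mem_support_deg hm) hdeg), mul_assoc, riesz_C_mul]

/-- embedding of moment-matrix indices into monomials -/
def eM {k : ℕ} (m : MIdx k) : Fin 2 →₀ ℕ :=
  Finsupp.single 0 (m.1.1 : ℕ) + Finsupp.single 1 (m.1.2 : ℕ)

@[simp] lemma eM_apply0 {k : ℕ} (m : MIdx k) : eM m 0 = (m.1.1 : ℕ) := by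
  simp [eM, Finsupp.single_apply]

@[simp] lemma eM_apply1 {k : ℕ} (m : MIdx k) : eM m 1 = (m.1.2 : ℕ) := by
  simp [eM, Finsupp.single_apply]

lemma eM_inj {k : ℕ} : Function.Injective (eM (k := k)) := by
  intro m n h
  have h0 : (m.1.1 : ℕ) = (n.1.1 : ℕ) := by
    simpa using congrArg (fun f => f 0) h
  have h1 : (m.1.2 : ℕ) = (n.1.2 : ℕ) := by
    simpa using congrArg (fun f => f 1) h
  exact Subtype.ext (Prod.ext (Fin.ext h0) (Fin.ext h1))

lemma support_subset_image_eM {k : ℕ} {p : MvPolynomial (Fin 2) ℝ}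
    (hdeg : p.totalDegree ≤ k) :
    p.support ⊆ Finset.image (eM (k := k)) Finset.univ := by
  intro m hm
  have hmk : m 0 + m 1 ≤ k := le_trans (mem_support_deg hm) hdeg
  have h0 : m 0 < k + 1 := by omega
  have h1 : m 1 < k + 1 := by omega
  refine Finset.mem_image.mpr ⟨⟨(⟨m 0, h0⟩, ⟨m 1, h1⟩), by simpa using hmk⟩,
    Finset.mem_univ _, ?_⟩
  refine finsupp_fin2_ext ?_ ?_ <;> simp [eM, Finsupp.single_apply]

/-- sum over monomial support as a sum over `MIdx k` -/
lemma sum_midx {k : ℕ} {p : MvPolynomial (Fin 2) ℝ} (hdeg : p.totalDegree ≤ k)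
    (g : (Fin 2 →₀ ℕ) → ℝ) :
    ∑ m ∈ p.support, p.coeff m * g m =
      ∑ m : MIdx k, p.coeff (eM m) * g (eM m) := by
  rw [← Finset.sum_image (g := eM) (f := fun m => p.coeff m * g m)
      (fun x _ y _ h => eM_inj h)]
  refine Finset.sum_subset (support_subset_image_eM hdeg) fun m _ hm => ?_
  rw [MvPolynomial.notMem_support_iff.mp hm, zero_mul]

/-- change of basis matrix -/
def Jmat (k : ℕ) (P1 P2 : MvPolynomial (Fin 2) ℝ) : Matrix (MIdx k) (MIdx k) ℝ :=
  fun m c => (P1 ^ (c.1.1 : ℕ) * P2 ^ (c.1.2 : ℕ)).coeff (eM m)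

lemma momentMatrix_transform (k : ℕ) (β' : ℕ → ℕ → ℝ) {P1 P2 : MvPolynomial (Fin 2) ℝ}
    (h1 : P1.totalDegree ≤ 1) (h2 : P2.totalDegree ≤ 1) :
    momentMatrix k (fun i j => riesz β' (P1 ^ i * P2 ^ j)) =
      (Jmat k P1 P2)ᵀ * momentMatrix k β' * Jmat k P1 P2 := by
  funext r c
  have key : riesz β' (P1 ^ ((r.1.1 : ℕ) + (c.1.1 : ℕ)) * P2 ^ ((r.1.2 : ℕ) + (c.1.2 : ℕ)))
      = ∑ m : MIdx k, ∑ n : MIdx k,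
          (P1 ^ (r.1.1 : ℕ) * P2 ^ (r.1.2 : ℕ)).coeff (eM m) *
          (P1 ^ (c.1.1 : ℕ) * P2 ^ (c.1.2 : ℕ)).coeff (eM n) *
          β' ((m.1.1 : ℕ) + (n.1.1 : ℕ)) ((m.1.2 : ℕ) + (n.1.2 : ℕ)) := by
    have hsplit : P1 ^ ((r.1.1 : ℕ) + (c.1.1 : ℕ)) * P2 ^ ((r.1.2 : ℕ) + (c.1.2 : ℕ)) =
        (P1 ^ (r.1.1 : ℕ) * P2 ^ (r.1.2 : ℕ)) * (P1 ^ (c.1.1 : ℕ) * P2 ^ (c.1.2 : ℕ)) := by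
      rw [pow_add, pow_add]; ring
    rw [hsplit, riesz_mul]
    have hdr : (P1 ^ (r.1.1 : ℕ) * P2 ^ (r.1.2 : ℕ)).totalDegree ≤ k :=
      le_trans (deg_pow_mul_le h1 h2 _ _) r.2
    have hdc : (P1 ^ (c.1.1 : ℕ) * P2 ^ (c.1.2 : ℕ)).totalDegree ≤ k :=
      le_trans (deg_pow_mul_le h1 h2 _ _) c.2
    have step1 : ∑ m ∈ (P1 ^ (r.1.1 : ℕ) * P2 ^ (r.1.2 : ℕ)).support,
        ∑ n ∈ (P1 ^ (c.1.1 : ℕ) * P2 ^ (c.1.2 : ℕ)).support,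
          (P1 ^ (r.1.1 : ℕ) * P2 ^ (r.1.2 : ℕ)).coeff m *
          (P1 ^ (c.1.1 : ℕ) * P2 ^ (c.1.2 : ℕ)).coeff n * β' (m 0 + n 0) (m 1 + n 1)
        = ∑ m ∈ (P1 ^ (r.1.1 : ℕ) * P2 ^ (r.1.2 : ℕ)).support,
            (P1 ^ (r.1.1 : ℕ) * P2 ^ (r.1.2 : ℕ)).coeff m *
            ∑ n ∈ (P1 ^ (c.1.1 : ℕ) * P2 ^ (c.1.2 : ℕ)).support,
              (P1 ^ (c.1.1 : ℕ) * P2 ^ (c.1.2 : ℕ)).coeff n * β' (m 0 + n 0) (m 1 + n 1) := by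
      refine Finset.sum_congr rfl fun m _ => ?_
      rw [Finset.mul_sum]; exact Finset.sum_congr rfl fun n _ => by ring
    rw [step1, sum_midx hdr (g := fun x =>
      ∑ n ∈ (P1 ^ (c.1.1 : ℕ) * P2 ^ (c.1.2 : ℕ)).support,
        (P1 ^ (c.1.1 : ℕ) * P2 ^ (c.1.2 : ℕ)).coeff n * β' (x 0 + n 0) (x 1 + n 1))]
    refine Finset.sum_congr rfl fun m _ => ?_
    rw [sum_midx hdc (g := fun x =>
        β' ((eM m) 0 + x 0) ((eM m) 1 + x 1)), Finset.mul_sum]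
    refine Finset.sum_congr rfl fun n _ => ?_
    simp only [eM_apply0, eM_apply1]
    ring
  simp only [momentMatrix, Matrix.mul_apply, Matrix.transpose_apply, Jmat]
  rw [key]
  rw [Finset.sum_comm]
  refine Finset.sum_congr rfl fun n _ => ?_
  rw [Finset.sum_mul]
  refine Finset.sum_congr rfl fun m _ => ?_
  ring

lemma Jmat_mul_eq_one {k : ℕ} {P1 P2 Q1 Q2 : MvPolynomial (Fin 2) ℝ}
    (g1 : Q1.totalDegree ≤ 1) (g2 : Q2.totalDegree ≤ 1)
    (hPQ1 : MvPolynomial.aeval ![P1, P2] Q1 = MvPolynomial.X 0)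
    (hPQ2 : MvPolynomial.aeval ![P1, P2] Q2 = MvPolynomial.X 1) :
    Jmat k P1 P2 * Jmat k Q1 Q2 = 1 := by
  funext m c
  have hQdeg : (Q1 ^ (c.1.1 : ℕ) * Q2 ^ (c.1.2 : ℕ)).totalDegree ≤ k :=
    le_trans (deg_pow_mul_le g1 g2 _ _) c.2
  have hX : MvPolynomial.aeval ![P1, P2] (Q1 ^ (c.1.1 : ℕ) * Q2 ^ (c.1.2 : ℕ)) =
      MvPolynomial.X 0 ^ (c.1.1 : ℕ) * MvPolynomial.X 1 ^ (c.1.2 : ℕ) := by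
    rw [_root_.map_mul, map_pow, map_pow, hPQ1, hPQ2]
  have hco := congrArg (fun q => MvPolynomial.coeff (eM m) q) hX
  rw [aeval_expand] at hco
  rw [MvPolynomial.coeff_sum] at hco
  simp only [MvPolynomial.coeff_C_mul, mul_assoc] at hco
  rw [sum_midx hQdeg (fun μ => (P1 ^ (μ 0) * P2 ^ (μ 1)).coeff (eM m))] at hco
  simp only [eM_apply0, eM_apply1] at hco
  have hrhs : (MvPolynomial.X 0 ^ (c.1.1 : ℕ) * MvPolynomial.X 1 ^ (c.1.2 : ℕ) :
      MvPolynomial (Fin 2) ℝ).coeff (eM m) = if m = c then 1 else 0 := by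
    rw [xy_pow_eq_monomial, MvPolynomial.coeff_monomial]
    have : (Finsupp.single 0 (c.1.1 : ℕ) + Finsupp.single 1 (c.1.2 : ℕ)) = eM c := rfl
    rw [this]
    by_cases h : m = c
    · simp [h]
    · rw [if_neg (fun he => h (eM_inj he.symm)), if_neg h]
  rw [hrhs] at hco
  simp only [Matrix.mul_apply, Jmat, Matrix.one_apply]
  rw [← hco]
  refine Finset.sum_congr rfl fun n _ => ?_
  ring

lemma ext_transform {k : ℕ} {β β' tβ : ℕ → ℕ → ℝ} {P1 P2 : MvPolynomial (Fin 2) ℝ}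
    (h1 : P1.totalDegree ≤ 1) (h2 : P2.totalDegree ≤ 1)
    (hext : ExtendsTo (2 * k - 1) β β')
    (htβ : ∀ i j, i + j ≤ 2 * k - 1 → tβ i j = riesz β (P1 ^ i * P2 ^ j)) :
    ExtendsTo (2 * k - 1) tβ (fun i j => riesz β' (P1 ^ i * P2 ^ j)) := by
  intro i j hij
  show riesz β' (P1 ^ i * P2 ^ j) = tβ i j
  rw [riesz_congr hext (le_trans (deg_pow_mul_le h1 h2 i j) hij), htβ i j hij]

lemma fwd_psd {k : ℕ} {β tβ : ℕ → ℕ → ℝ} {P1 P2 : MvPolynomial (Fin 2) ℝ}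
    (h1 : P1.totalDegree ≤ 1) (h2 : P2.totalDegree ≤ 1)
    (htβ : ∀ i j, i + j ≤ 2 * k - 1 → tβ i j = riesz β (P1 ^ i * P2 ^ j)) :
    (∃ β', ExtendsTo (2 * k - 1) β β' ∧ (momentMatrix k β').PosSemidef) →
    ∃ γ, ExtendsTo (2 * k - 1) tβ γ ∧ (momentMatrix k γ).PosSemidef := by
  rintro ⟨β', hext, hpsd⟩
  refine ⟨fun i j => riesz β' (P1 ^ i * P2 ^ j), ext_transform h1 h2 hext htβ, ?_⟩
  rw [momentMatrix_transform k β' h1 h2]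
  have := hpsd.conjTranspose_mul_mul_same (Jmat k P1 P2)
  rwa [Matrix.conjTranspose_eq_transpose_of_trivial] at this

lemma fwd_rank {k : ℕ} {β tβ : ℕ → ℕ → ℝ} {P1 P2 Q1 Q2 : MvPolynomial (Fin 2) ℝ}
    (h1 : P1.totalDegree ≤ 1) (h2 : P2.totalDegree ≤ 1)
    (g1 : Q1.totalDegree ≤ 1) (g2 : Q2.totalDegree ≤ 1)
    (hPQ1 : MvPolynomial.aeval ![P1, P2] Q1 = MvPolynomial.X 0)
    (hPQ2 : MvPolynomial.aeval ![P1, P2] Q2 = MvPolynomial.X 1)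
    (htβ : ∀ i j, i + j ≤ 2 * k - 1 → tβ i j = riesz β (P1 ^ i * P2 ^ j)) (r : ℕ) :
    (∃ β', ExtendsTo (2 * k - 1) β β' ∧ (momentMatrix k β').rank = r) →
    ∃ γ, ExtendsTo (2 * k - 1) tβ γ ∧ (momentMatrix k γ).rank = r := by
  classical
  rintro ⟨β', hext, hrank⟩
  refine ⟨fun i j => riesz β' (P1 ^ i * P2 ^ j), ext_transform h1 h2 hext htβ, ?_⟩
  rw [momentMatrix_transform k β' h1 h2]
  have hone := Jmat_mul_eq_one (k := k) (P1 := P1) (P2 := P2) g1 g2 hPQ1 hPQ2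
  have hdet : IsUnit (Jmat k P1 P2).det := by
    have := congrArg Matrix.det hone
    rw [Matrix.det_mul, Matrix.det_one] at this
    exact IsUnit.of_mul_eq_one _ this
  have hdetT : IsUnit ((Jmat k P1 P2)ᵀ).det := by rwa [Matrix.det_transpose]
  rw [Matrix.rank_mul_eq_left_of_isUnit_det _ _ hdet,
    Matrix.rank_mul_eq_right_of_isUnit_det _ _ hdetT, hrank]

lemma riesz_xpow_mul (L : ℕ → ℕ → ℝ) (a b : ℕ) (q : MvPolynomial (Fin 2) ℝ) :
    riesz L (MvPolynomial.X 0 ^ a * MvPolynomial.X 1 ^ b * q) =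
      ∑ n ∈ q.support, q.coeff n * L (a + n 0) (b + n 1) := by
  rw [xy_pow_eq_monomial, riesz_mul, MvPolynomial.support_monomial]
  rw [if_neg (one_ne_zero)]
  rw [Finset.sum_singleton]
  refine Finset.sum_congr rfl fun n _ => ?_
  rw [MvPolynomial.coeff_monomial, if_pos rfl]
  simp [Finsupp.single_apply]

lemma colrel_iff {k : ℕ} {L : ℕ → ℕ → ℝ} {q : MvPolynomial (Fin 2) ℝ} :
    IsColRelation k L q ↔ ∀ a b : ℕ, a + b ≤ k →
      riesz L (MvPolynomial.X 0 ^ a * MvPolynomial.X 1 ^ b * q) = 0 := by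
  unfold IsColRelation
  refine forall_congr' fun a => forall_congr' fun b => imp_congr_right fun _ => ?_
  rw [riesz_xpow_mul]

lemma rel_transfer {k : ℕ} {L : ℕ → ℕ → ℝ} {s : MvPolynomial (Fin 2) ℝ}
    {R1 R2 : MvPolynomial (Fin 2) ℝ}
    (h : ∀ a b : ℕ, a + b ≤ k → riesz L (R1 ^ a * R2 ^ b * s) = 0)
    {u : MvPolynomial (Fin 2) ℝ} (hu : u.totalDegree ≤ k) :
    riesz L (MvPolynomial.aeval ![R1, R2] u * s) = 0 := by
  rw [aeval_expand, Finset.sum_mul, riesz_sum]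
  refine Finset.sum_eq_zero fun m hm => ?_
  have hre : MvPolynomial.C (u.coeff m) * R1 ^ (m 0) * R2 ^ (m 1) * s =
      MvPolynomial.C (u.coeff m) * (R1 ^ (m 0) * R2 ^ (m 1) * s) := by ring
  rw [hre, riesz_C_mul, h _ _ (le_trans (mem_support_deg hm) hu), mul_zero]

lemma colrel_transform {k : ℕ} {L : ℕ → ℕ → ℝ} {P1 P2 p : MvPolynomial (Fin 2) ℝ} :
    IsColRelation k (fun i j => riesz L (P1 ^ i * P2 ^ j)) p ↔
      ∀ a b : ℕ, a + b ≤ k →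
        riesz L (P1 ^ a * P2 ^ b * MvPolynomial.aeval ![P1, P2] p) = 0 := by
  have key : ∀ a b : ℕ, riesz L (P1 ^ a * P2 ^ b * MvPolynomial.aeval ![P1, P2] p) =
      ∑ m ∈ p.support, p.coeff m * riesz L (P1 ^ (a + m 0) * P2 ^ (b + m 1)) := by
    intro a b
    rw [aeval_expand, Finset.mul_sum, riesz_sum]
    refine Finset.sum_congr rfl fun m _ => ?_
    have hre : P1 ^ a * P2 ^ b * (MvPolynomial.C (p.coeff m) * P1 ^ (m 0) * P2 ^ (m 1)) =
        MvPolynomial.C (p.coeff m) * (P1 ^ (a + m 0) * P2 ^ (b + m 1)) := by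
      rw [pow_add, pow_add]; ring
    rw [hre, riesz_C_mul]
  unfold IsColRelation
  refine forall_congr' fun a => forall_congr' fun b => imp_congr_right fun _ => ?_
  rw [key]

lemma fwd_rg {k : ℕ} {β tβ : ℕ → ℕ → ℝ} {P1 P2 Q1 Q2 : MvPolynomial (Fin 2) ℝ}
    (h1 : P1.totalDegree ≤ 1) (h2 : P2.totalDegree ≤ 1)
    (g1 : Q1.totalDegree ≤ 1) (g2 : Q2.totalDegree ≤ 1)
    (hPQ1 : MvPolynomial.aeval ![P1, P2] Q1 = MvPolynomial.X 0)
    (hPQ2 : MvPolynomial.aeval ![P1, P2] Q2 = MvPolynomial.X 1)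
    (htβ : ∀ i j, i + j ≤ 2 * k - 1 → tβ i j = riesz β (P1 ^ i * P2 ^ j)) :
    (∃ β', ExtendsTo (2 * k - 1) β β' ∧ RecursivelyGenerated k β') →
    ∃ γ, ExtendsTo (2 * k - 1) tβ γ ∧ RecursivelyGenerated k γ := by
  rintro ⟨β', hext, hrg⟩
  refine ⟨fun i j => riesz β' (P1 ^ i * P2 ^ j), ext_transform h1 h2 hext htβ, ?_⟩
  intro p q hp hq hpq hrel
  rw [colrel_transform] at hrel ⊢
  have hXp : IsColRelation k β' (MvPolynomial.aeval ![P1, P2] p) := by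
    rw [colrel_iff]
    intro a b hab
    have hXQ : (MvPolynomial.X 0 ^ a * MvPolynomial.X 1 ^ b : MvPolynomial (Fin 2) ℝ) =
        MvPolynomial.aeval ![P1, P2] (Q1 ^ a * Q2 ^ b) := by
      rw [_root_.map_mul, map_pow, map_pow, hPQ1, hPQ2]
    rw [hXQ]
    exact rel_transfer hrel (le_trans (deg_pow_mul_le g1 g2 a b) hab)
  have hdTp : (MvPolynomial.aeval ![P1, P2] p).totalDegree ≤ k :=
    le_trans (deg_aeval_le h1 h2 p) hp
  have hdTq : (MvPolynomial.aeval ![P1, P2] q).totalDegree ≤ k :=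
    le_trans (deg_aeval_le h1 h2 q) hq
  have hdTpq : (MvPolynomial.aeval ![P1, P2] p * MvPolynomial.aeval ![P1, P2] q).totalDegree
      ≤ k := by
    rw [← _root_.map_mul]
    exact le_trans (deg_aeval_le h1 h2 (p * q)) hpq
  have hXpq := hrg _ _ hdTp hdTq hdTpq hXp
  have hX : ∀ a b : ℕ, a + b ≤ k → riesz β'
      (MvPolynomial.X 0 ^ a * MvPolynomial.X 1 ^ b *
        (MvPolynomial.aeval ![P1, P2] p * MvPolynomial.aeval ![P1, P2] q)) = 0 :=
    colrel_iff.mp hXpq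
  intro a b hab
  rw [_root_.map_mul]
  have hPX : (P1 ^ a * P2 ^ b : MvPolynomial (Fin 2) ℝ) =
      MvPolynomial.aeval ![MvPolynomial.X 0, MvPolynomial.X 1] (P1 ^ a * P2 ^ b) :=
    (aeval_XX _).symm
  rw [hPX]
  refine rel_transfer (k := k) ?_ (le_trans (deg_pow_mul_le h1 h2 a b) hab)
  intro a' b' hab'
  exact hX a' b' hab'

lemma riesz_atomic {D s : ℕ} {β : ℕ → ℕ → ℝ} {pts : Fin s → ℝ × ℝ} {ρ : Fin s → ℝ}
    (hmom : ∀ i j : ℕ, i + j ≤ D → β i j = ∑ p, ρ p * (pts p).1 ^ i * (pts p).2 ^ j)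
    {q : MvPolynomial (Fin 2) ℝ} (hq : q.totalDegree ≤ D) :
    riesz β q = ∑ p, ρ p * MvPolynomial.eval ![(pts p).1, (pts p).2] q := by
  rw [riesz]
  have step : ∀ m ∈ q.support, q.coeff m * β (m 0) (m 1) =
      ∑ p, q.coeff m * (ρ p * (pts p).1 ^ (m 0) * (pts p).2 ^ (m 1)) := fun m hm => by
    rw [hmom _ _ (le_trans (mem_support_deg hm) hq), Finset.mul_sum]
  rw [Finset.sum_congr rfl step, Finset.sum_comm]
  refine Finset.sum_congr rfl fun p _ => ?_
  rw [MvPolynomial.eval_eq', Finset.mul_sum]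
  refine Finset.sum_congr rfl fun m _ => ?_
  rw [Fin.prod_univ_two]
  simp only [Matrix.cons_val_zero, Matrix.cons_val_one, Matrix.head_cons]
  ring

lemma fwd_meas {k : ℕ} {β tβ : ℕ → ℕ → ℝ} (a b c d e f : ℝ) (hΔ : b * f - c * e ≠ 0)
    (htβ : ∀ i j : ℕ, i + j ≤ 2 * k - 1 →
      tβ i j = riesz β
        (((MvPolynomial.C a + MvPolynomial.C b * MvPolynomial.X 0 +
            MvPolynomial.C c * MvPolynomial.X 1) ^ i *
          (MvPolynomial.C d + MvPolynomial.C e * MvPolynomial.X 0 +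
            MvPolynomial.C f * MvPolynomial.X 1) ^ j : MvPolynomial (Fin 2) ℝ)))
    (r : ℕ) (K : Set (ℝ × ℝ)) :
    HasAtomicRepMeasure K (2 * k - 1) β r →
    HasAtomicRepMeasure
      ((fun p : ℝ × ℝ => (a + b * p.1 + c * p.2, d + e * p.1 + f * p.2)) '' K)
      (2 * k - 1) tβ r := by
  rintro ⟨pts, ρ, hinj, hK, hρ, hmom⟩
  set φ : ℝ × ℝ → ℝ × ℝ :=
    fun p => (a + b * p.1 + c * p.2, d + e * p.1 + f * p.2) with hφ
  have hφinj : Function.Injective φ := by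
    intro p q h
    have h1 : a + b * p.1 + c * p.2 = a + b * q.1 + c * q.2 := congrArg Prod.fst h
    have h2 : d + e * p.1 + f * p.2 = d + e * q.1 + f * q.2 := congrArg Prod.snd h
    have hx : (b * f - c * e) * (p.1 - q.1) = 0 := by linear_combination f * h1 - c * h2
    have hy : (b * f - c * e) * (p.2 - q.2) = 0 := by linear_combination (-e) * h1 + b * h2
    have hx' : p.1 = q.1 := by
      have := (mul_eq_zero.mp hx).resolve_left hΔ; linarith
    have hy' : p.2 = q.2 := by
      have := (mul_eq_zero.mp hy).resolve_left hΔ; linarith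
    exact Prod.ext hx' hy'
  refine ⟨φ ∘ pts, ρ, hφinj.comp hinj, fun p => ⟨pts p, hK p, rfl⟩, hρ, ?_⟩
  intro i j hij
  rw [htβ i j hij,
    riesz_atomic hmom (le_trans (deg_pow_mul_le (deg_P_le a b c) (deg_P_le d e f) i j) hij)]
  refine Finset.sum_congr rfl fun p _ => ?_
  simp only [MvPolynomial.eval_mul, MvPolynomial.eval_pow, MvPolynomial.eval_add,
    MvPolynomial.eval_C, MvPolynomial.eval_X,
    Matrix.cons_val_zero, Matrix.cons_val_one, Matrix.head_cons, Function.comp_apply, hφ]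
  ring

lemma aeval_P (P1 P2 : MvPolynomial (Fin 2) ℝ) (u v w : ℝ) :
    MvPolynomial.aeval ![P1, P2]
      (MvPolynomial.C u + MvPolynomial.C v * MvPolynomial.X 0 +
        MvPolynomial.C w * MvPolynomial.X 1) =
      MvPolynomial.C u + MvPolynomial.C v * P1 + MvPolynomial.C w * P2 := by
  simp [MvPolynomial.algebraMap_eq]

lemma affine_identity (u v w a b c d e f : ℝ) {t : MvPolynomial (Fin 2) ℝ}
    (h : MvPolynomial.C (u + v * a + w * d) + MvPolynomial.C (v * b + w * e) * MvPolynomial.X 0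
        + MvPolynomial.C (v * c + w * f) * MvPolynomial.X 1 = t) :
    MvPolynomial.aeval
      ![MvPolynomial.C a + MvPolynomial.C b * MvPolynomial.X 0 +
          MvPolynomial.C c * MvPolynomial.X 1,
        MvPolynomial.C d + MvPolynomial.C e * MvPolynomial.X 0 +
          MvPolynomial.C f * MvPolynomial.X 1]
      (MvPolynomial.C u + MvPolynomial.C v * MvPolynomial.X 0 +
        MvPolynomial.C w * MvPolynomial.X 1) = t := by
  rw [aeval_P, ← h]
  simp only [map_add, MvPolynomial.C_mul]
  ring

set_option maxHeartbeats 1600000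

/-- Invariance of the odd-degree TMP under invertible affine linear
transformations. -/
theorem statement11 (k : ℕ) (hk : 1 ≤ k) (β : ℕ → ℕ → ℝ)
    (a b c d e f : ℝ) (habcdef : b * f - c * e ≠ 0)
    (tβ : ℕ → ℕ → ℝ)
    (htβ : ∀ i j : ℕ, i + j ≤ 2 * k - 1 →
      tβ i j = riesz β
        (((MvPolynomial.C a + MvPolynomial.C b * MvPolynomial.X 0 +
            MvPolynomial.C c * MvPolynomial.X 1) ^ i *
          (MvPolynomial.C d + MvPolynomial.C e * MvPolynomial.X 0 +
            MvPolynomial.C f * MvPolynomial.X 1) ^ j : MvPolynomial (Fin 2) ℝ))) :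
    -- (1) psd completability is invariant
    ((∃ β' : ℕ → ℕ → ℝ, ExtendsTo (2 * k - 1) β β' ∧ (momentMatrix k β').PosSemidef) ↔
      (∃ β' : ℕ → ℕ → ℝ, ExtendsTo (2 * k - 1) tβ β' ∧ (momentMatrix k β').PosSemidef)) ∧
    -- (2) existence of a rank `r` extension is invariant
    (∀ r : ℕ,
      (∃ β' : ℕ → ℕ → ℝ, ExtendsTo (2 * k - 1) β β' ∧ (momentMatrix k β').rank = r) ↔
      (∃ β' : ℕ → ℕ → ℝ, ExtendsTo (2 * k - 1) tβ β' ∧ (momentMatrix k β').rank = r)) ∧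
    -- (3) existence of a recursively generated extension is invariant
    ((∃ β' : ℕ → ℕ → ℝ, ExtendsTo (2 * k - 1) β β' ∧ RecursivelyGenerated k β') ↔
      (∃ β' : ℕ → ℕ → ℝ, ExtendsTo (2 * k - 1) tβ β' ∧ RecursivelyGenerated k β')) ∧
    -- (4) existence of an `r`-atomic representing measure is invariant
    (∀ (r : ℕ) (K : Set (ℝ × ℝ)), IsClosed K →
      (HasAtomicRepMeasure K (2 * k - 1) β r ↔
        HasAtomicRepMeasure
          ((fun p : ℝ × ℝ => (a + b * p.1 + c * p.2, d + e * p.1 + f * p.2)) '' K)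
          (2 * k - 1) tβ r)) := by
  have hΔ : b * f - c * e ≠ 0 := habcdef
  set a₁ : ℝ := (c * d - a * f) / (b * f - c * e) with ha₁
  set b₁ : ℝ := f / (b * f - c * e) with hb₁
  set c₁ : ℝ := -c / (b * f - c * e) with hc₁
  set a₂ : ℝ := (a * e - b * d) / (b * f - c * e) with ha₂
  set b₂ : ℝ := -e / (b * f - c * e) with hb₂
  set c₂ : ℝ := b / (b * f - c * e) with hc₂
  have s1 : a₁ + b₁ * a + c₁ * d = 0 := by rw [ha₁, hb₁, hc₁]; field_simp; ring
  have s2 : b₁ * b + c₁ * e = 1 := by rw [hb₁, hc₁, div_eq_mul_inv, div_eq_mul_inv]; linear_combination (mul_inv_cancel₀ hΔ)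
  have s3 : b₁ * c + c₁ * f = 0 := by rw [hb₁, hc₁]; field_simp; ring
  have s4 : a₂ + b₂ * a + c₂ * d = 0 := by rw [ha₂, hb₂, hc₂]; field_simp; ring
  have s5 : b₂ * b + c₂ * e = 0 := by rw [hb₂, hc₂]; field_simp; ring
  have s6 : b₂ * c + c₂ * f = 1 := by rw [hb₂, hc₂, div_eq_mul_inv, div_eq_mul_inv]; linear_combination (mul_inv_cancel₀ hΔ)
  have t1 : a + b * a₁ + c * a₂ = 0 := by rw [ha₁, ha₂]; field_simp; ring
  have t2 : b * b₁ + c * b₂ = 1 := by rw [hb₁, hb₂]; field_simp; ring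
  have t3 : b * c₁ + c * c₂ = 0 := by rw [hc₁, hc₂]; field_simp; ring
  have t4 : d + e * a₁ + f * a₂ = 0 := by rw [ha₁, ha₂, div_eq_mul_inv, div_eq_mul_inv]; linear_combination (-d) * (mul_inv_cancel₀ hΔ)
  have t5 : e * b₁ + f * b₂ = 0 := by rw [hb₁, hb₂]; field_simp; ring
  have t6 : e * c₁ + f * c₂ = 1 := by rw [hc₁, hc₂, div_eq_mul_inv, div_eq_mul_inv]; linear_combination (mul_inv_cancel₀ hΔ)
  have hval : (b * f - c * e) * (b₁ * c₂ - c₁ * b₂) = 1 := by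
    rw [hb₁, hc₁, hb₂, hc₂]; field_simp
  have hΔ2 : b₁ * c₂ - c₁ * b₂ ≠ 0 := by
    intro h0
    rw [h0, mul_zero] at hval
    exact one_ne_zero hval.symm
  have hdP1 := deg_P_le a b c
  have hdP2 := deg_P_le d e f
  have hdQ1 := deg_P_le a₁ b₁ c₁
  have hdQ2 := deg_P_le a₂ b₂ c₂
  have hPQ1 : MvPolynomial.aeval
      ![MvPolynomial.C a + MvPolynomial.C b * MvPolynomial.X 0 +
          MvPolynomial.C c * MvPolynomial.X 1,
        MvPolynomial.C d + MvPolynomial.C e * MvPolynomial.X 0 +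
          MvPolynomial.C f * MvPolynomial.X 1]
      (MvPolynomial.C a₁ + MvPolynomial.C b₁ * MvPolynomial.X 0 +
        MvPolynomial.C c₁ * MvPolynomial.X 1) = (MvPolynomial.X 0 : MvPolynomial (Fin 2) ℝ) :=
    affine_identity a₁ b₁ c₁ a b c d e f (by rw [s1, s2, s3]; simp)
  have hPQ2 : MvPolynomial.aeval
      ![MvPolynomial.C a + MvPolynomial.C b * MvPolynomial.X 0 +
          MvPolynomial.C c * MvPolynomial.X 1,
        MvPolynomial.C d + MvPolynomial.C e * MvPolynomial.X 0 +
          MvPolynomial.C f * MvPolynomial.X 1]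
      (MvPolynomial.C a₂ + MvPolynomial.C b₂ * MvPolynomial.X 0 +
        MvPolynomial.C c₂ * MvPolynomial.X 1) = (MvPolynomial.X 1 : MvPolynomial (Fin 2) ℝ) :=
    affine_identity a₂ b₂ c₂ a b c d e f (by rw [s4, s5, s6]; simp)
  have hQP1 : MvPolynomial.aeval
      ![MvPolynomial.C a₁ + MvPolynomial.C b₁ * MvPolynomial.X 0 +
          MvPolynomial.C c₁ * MvPolynomial.X 1,
        MvPolynomial.C a₂ + MvPolynomial.C b₂ * MvPolynomial.X 0 +
          MvPolynomial.C c₂ * MvPolynomial.X 1]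
      (MvPolynomial.C a + MvPolynomial.C b * MvPolynomial.X 0 +
        MvPolynomial.C c * MvPolynomial.X 1) = (MvPolynomial.X 0 : MvPolynomial (Fin 2) ℝ) :=
    affine_identity a b c a₁ b₁ c₁ a₂ b₂ c₂ (by rw [t1, t2, t3]; simp)
  have hQP2 : MvPolynomial.aeval
      ![MvPolynomial.C a₁ + MvPolynomial.C b₁ * MvPolynomial.X 0 +
          MvPolynomial.C c₁ * MvPolynomial.X 1,
        MvPolynomial.C a₂ + MvPolynomial.C b₂ * MvPolynomial.X 0 +
          MvPolynomial.C c₂ * MvPolynomial.X 1]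
      (MvPolynomial.C d + MvPolynomial.C e * MvPolynomial.X 0 +
        MvPolynomial.C f * MvPolynomial.X 1) = (MvPolynomial.X 1 : MvPolynomial (Fin 2) ℝ) :=
    affine_identity d e f a₁ b₁ c₁ a₂ b₂ c₂ (by rw [t4, t5, t6]; simp)
  have htβ' : ∀ i j : ℕ, i + j ≤ 2 * k - 1 →
      β i j = riesz tβ
        ((MvPolynomial.C a₁ + MvPolynomial.C b₁ * MvPolynomial.X 0 +
            MvPolynomial.C c₁ * MvPolynomial.X 1) ^ i *
          (MvPolynomial.C a₂ + MvPolynomial.C b₂ * MvPolynomial.X 0 +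
            MvPolynomial.C c₂ * MvPolynomial.X 1) ^ j) := by
    intro i j hij
    have hd : (((MvPolynomial.C a₁ + MvPolynomial.C b₁ * MvPolynomial.X 0 +
        MvPolynomial.C c₁ * MvPolynomial.X 1) ^ i *
          (MvPolynomial.C a₂ + MvPolynomial.C b₂ * MvPolynomial.X 0 +
            MvPolynomial.C c₂ * MvPolynomial.X 1) ^ j : MvPolynomial (Fin 2) ℝ)).totalDegree ≤ 2 * k - 1 :=
      le_trans (deg_pow_mul_le hdQ1 hdQ2 i j) hij
    rw [riesz_transfer htβ hd, _root_.map_mul, map_pow, map_pow, hPQ1, hPQ2, riesz_X_pow]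
  refine ⟨⟨fwd_psd hdP1 hdP2 htβ, fwd_psd hdQ1 hdQ2 htβ'⟩,
    fun r => ⟨fwd_rank hdP1 hdP2 hdQ1 hdQ2 hPQ1 hPQ2 htβ r,
      fwd_rank hdQ1 hdQ2 hdP1 hdP2 hQP1 hQP2 htβ' r⟩,
    ⟨fwd_rg hdP1 hdP2 hdQ1 hdQ2 hPQ1 hPQ2 htβ, fwd_rg hdQ1 hdQ2 hdP1 hdP2 hQP1 hQP2 htβ'⟩,
    fun r K _ => ⟨fwd_meas a b c d e f hΔ htβ r K, ?_⟩⟩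
  intro h
  have h2 := fwd_meas a₁ b₁ c₁ a₂ b₂ c₂ hΔ2 htβ' r _ h
  have hset : (fun p : ℝ × ℝ => (a₁ + b₁ * p.1 + c₁ * p.2, a₂ + b₂ * p.1 + c₂ * p.2)) ''
      ((fun p : ℝ × ℝ => (a + b * p.1 + c * p.2, d + e * p.1 + f * p.2)) '' K) = K := by
    rw [← Set.image_comp]
    have hcomp : ((fun p : ℝ × ℝ => (a₁ + b₁ * p.1 + c₁ * p.2, a₂ + b₂ * p.1 + c₂ * p.2)) ∘
        (fun p : ℝ × ℝ => (a + b * p.1 + c * p.2, d + e * p.1 + f * p.2))) = id := by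
      funext z
      simp only [Function.comp_apply, id_eq]
      refine Prod.ext ?_ ?_
      · show a₁ + b₁ * (a + b * z.1 + c * z.2) + c₁ * (d + e * z.1 + f * z.2) = z.1
        linear_combination s1 + z.1 * s2 + z.2 * s3
      · show a₂ + b₂ * (a + b * z.1 + c * z.2) + c₂ * (d + e * z.1 + f * z.2) = z.2
        linear_combination s4 + z.1 * s5 + z.2 * s6
    rw [hcomp, Set.image_id]
  rwa [hset] at h2


end TMP
end
end

section
/- Let q(x) = Σ_{i=0}^{ℓ} q_i x^i ∈ ℝ[x] with ℓ ≥ 3 and q_ℓ ≠ 0, let k ≥ ℓ, and let β = β^{(2(k+ℓ−2))} be a real 2-dimensional sequence of degree 2(k+ℓ−2) satisfying the relations β_{i,j+1} = Σ_{p=0}^{ℓ} q_p β_{i+p,j} for all i,j ≥ 0 with i + ℓ + j ≤ 2(k+ℓ−2). Define γ_t for t = 0, 1, …, 2kℓ+2 recursively by γ_t = q_ℓ^{−⌊t/ℓ⌋} ( β_{t mod ℓ, ⌊t/ℓ⌋} − Σ_{s=0}^{t−1} q_{t mod ℓ, ⌊t/ℓ⌋, s} · γ_s ). Then for every t ∈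 {0,1,…,2kℓ+2} and every pair of integers i,j ≥ 0 with t = i + jℓ and i + j ≤ 2(k+ℓ−2), one has γ_t = q_ℓ^{−j} ( β_{i,j} − Σ_{s=0}^{t−1} q_{i,j,s} · γ_s ). -/
open MeasureTheory Matrix Finset

noncomputable section

namespace TMP

lemma coeff_q (l : ℕ) (qc : ℕ → ℝ) (q : Polynomial ℝ)
    (hq : q = ∑ i ∈ Finset.range (l + 1), Polynomial.C (qc i) * Polynomial.X ^ i)
    (n : ℕ) : q.coeff n = if n < l + 1 then qc n else 0 := by
  subst hq
  rw [Polynomial.finset_sum_coeff]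
  simp only [Polynomial.coeff_C_mul, Polynomial.coeff_X_pow]
  rw [Finset.sum_congr rfl (fun i _ => by rw [mul_ite, mul_one, mul_zero])]
  simp [Finset.sum_ite_eq', eq_comm]

lemma natDeg_q (l : ℕ) (qc : ℕ → ℝ) (q : Polynomial ℝ)
    (hq : q = ∑ i ∈ Finset.range (l + 1), Polynomial.C (qc i) * Polynomial.X ^ i)
    (hql : qc l ≠ 0) : q.natDegree = l := by
  have h1 : q.coeff l = qc l := by rw [coeff_q l qc q hq]; simp
  apply le_antisymm
  · rw [Polynomial.natDegree_le_iff_coeff_eq_zero]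
    intro m hm
    rw [coeff_q l qc q hq]
    simp [Nat.not_lt.mpr hm]
  · exact Polynomial.le_natDegree_of_ne_zero (h1 ▸ hql)

lemma qCoef_zero (l : ℕ) (qc : ℕ → ℝ) (q : Polynomial ℝ)
    (hq : q = ∑ i ∈ Finset.range (l + 1), Polynomial.C (qc i) * Polynomial.X ^ i)
    (hql : qc l ≠ 0) {a j s : ℕ} (hs : a + j * l < s) : qCoef q a j s = 0 := by
  apply Polynomial.coeff_eq_zero_of_natDegree_lt
  calc (Polynomial.X ^ a * q ^ j).natDegree
      ≤ (Polynomial.X (R := ℝ) ^ a).natDegree + (q ^ j).natDegree :=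
        Polynomial.natDegree_mul_le
    _ ≤ a + j * l := by
        rw [Polynomial.natDegree_X_pow]
        gcongr
        calc (q ^ j).natDegree ≤ j * q.natDegree := Polynomial.natDegree_pow_le
          _ ≤ j * l := by rw [natDeg_q l qc q hq hql]
    _ < s := hs

lemma qCoef_top (l : ℕ) (qc : ℕ → ℝ) (q : Polynomial ℝ)
    (hq : q = ∑ i ∈ Finset.range (l + 1), Polynomial.C (qc i) * Polynomial.X ^ i)
    (hql : qc l ≠ 0) (a j : ℕ) : qCoef q a j (a + j * l) = qc l ^ j := by
  unfold qCoef
  rw [add_comm, Polynomial.coeff_X_pow_mul]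
  have := Polynomial.coeff_pow_mul_natDegree q j
  rw [natDeg_q l qc q hq hql] at this
  rw [this, Polynomial.leadingCoeff, natDeg_q l qc q hq hql]
  rw [coeff_q l qc q hq]; simp

lemma qCoef_rec (l : ℕ) (qc : ℕ → ℝ) (q : Polynomial ℝ)
    (hq : q = ∑ i ∈ Finset.range (l + 1), Polynomial.C (qc i) * Polynomial.X ^ i)
    (i j s : ℕ) :
    qCoef q i (j + 1) s = ∑ p ∈ Finset.range (l + 1), qc p * qCoef q (i + p) j s := by
  unfold qCoef
  have h : Polynomial.X (R := ℝ) ^ i * q ^ (j + 1)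
      = ∑ p ∈ Finset.range (l + 1), Polynomial.C (qc p) * (Polynomial.X ^ (i + p) * q ^ j) := by
    rw [pow_succ]
    nth_rewrite 2 [hq]
    rw [Finset.mul_sum, Finset.mul_sum]
    apply Finset.sum_congr rfl
    intro p _
    rw [pow_add]
    ring
  rw [h, Polynomial.finset_sum_coeff]
  simp [Polynomial.coeff_C_mul]


/-- Claim 4: the recursion defining `γ` is independent of the chosen
representation `t = i + jℓ`. -/
theorem statement12 (l : ℕ) (hl : 3 ≤ l) (qc : ℕ → ℝ) (hql : qc l ≠ 0)
    (q : Polynomial ℝ)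
    (hq : q = ∑ i ∈ Finset.range (l + 1), Polynomial.C (qc i) * Polynomial.X ^ i)
    (k : ℕ) (hk : l ≤ k) (β : ℕ → ℕ → ℝ)
    (hrg : ∀ i j : ℕ, i + l + j ≤ 2 * (k + l - 2) →
      β i (j + 1) = ∑ p ∈ Finset.range (l + 1), qc p * β (i + p) j)
    (γ : ℕ → ℝ)
    (hγ : ∀ t : ℕ, t ≤ 2 * k * l + 2 →
      γ t = (qc l ^ (t / l))⁻¹ *
        (β (t % l) (t / l) - ∑ s ∈ Finset.range t, qCoef q (t % l) (t / l) s * γ s)) :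
    ∀ t : ℕ, t ≤ 2 * k * l + 2 → ∀ i j : ℕ, t = i + j * l → i + j ≤ 2 * (k + l - 2) →
      γ t = (qc l ^ j)⁻¹ * (β i j - ∑ s ∈ Finset.range t, qCoef q i j s * γ s) := by
  intro t
  induction t using Nat.strong_induction_on with
  | _ t IH =>
    intro ht i
    induction i using Nat.strong_induction_on with
    | _ i IHi =>
      intro j htij hij
      by_cases hi : i < l
      · have hl0 : 0 < l := by omega
        have hmod : t % l = i := by
          rw [htij, Nat.add_mul_mod_self_right, Nat.mod_eq_of_lt hi]
        have hdiv : t / l = j := by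
          rw [htij, Nat.add_mul_div_right _ _ hl0, Nat.div_eq_of_lt hi, zero_add]
        have h := hγ t ht
        rw [hmod, hdiv] at h
        exact h
      · push_neg at hi
        have hii : i = (i - l) + l := by omega
        set i' := i - l with hi'def
        have hne : qc l ^ j ≠ 0 := pow_ne_zero _ hql
        -- D p = 0 for p < l
        have hD : ∀ p, p < l →
            β (i' + p) j - ∑ s ∈ Finset.range t, qCoef q (i' + p) j s * γ s = 0 := by
          intro p hp
          have ht' : i' + p + j * l < t := by omega
          have hIHt := IH (i' + p + j * l) ht' (by omega) (i' + p) j rfl (by omega)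
          have h1 : β (i' + p) j
              - ∑ s ∈ Finset.range (i' + p + j * l), qCoef q (i' + p) j s * γ s
              = qc l ^ j * γ (i' + p + j * l) := by
            rw [hIHt]; field_simp
          have hsplit : ∑ s ∈ Finset.range t, qCoef q (i' + p) j s * γ s
              = (∑ s ∈ Finset.range (i' + p + j * l), qCoef q (i' + p) j s * γ s)
                + qc l ^ j * γ (i' + p + j * l) := by
            have hz2 : ∑ s ∈ Finset.Ico (i' + p + j * l + 1) t,
                qCoef q (i' + p) j s * γ s = 0 := by
              apply Finset.sum_eq_zero
              intro s hs
              have := (Finset.mem_Ico.mp hs).1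
              rw [qCoef_zero l qc q hq hql (by omega), zero_mul]
            rw [Finset.range_eq_Ico,
              ← Finset.sum_Ico_consecutive _ (Nat.zero_le (i' + p + j * l + 1)) ht',
              hz2, add_zero, ← Finset.range_eq_Ico, Finset.sum_range_succ,
              qCoef_top l qc q hq hql]
          rw [hsplit]
          linarith [h1]
        -- inner IH at (i', j+1)
        have hstep := IHi i' (by omega) (j + 1)
          (by rw [Nat.succ_mul]; omega) (by omega)
        have hβrec := hrg i' j (by omega)
        have hsum : ∑ s ∈ Finset.range t, qCoef q i' (j + 1) s * γ s
            = ∑ p ∈ Finset.range (l + 1), qc p *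
                ∑ s ∈ Finset.range t, qCoef q (i' + p) j s * γ s := by
          calc ∑ s ∈ Finset.range t, qCoef q i' (j + 1) s * γ s
              = ∑ s ∈ Finset.range t, ∑ p ∈ Finset.range (l + 1),
                  qc p * qCoef q (i' + p) j s * γ s := by
                apply Finset.sum_congr rfl
                intro s _
                rw [qCoef_rec l qc q hq, Finset.sum_mul]
            _ = ∑ p ∈ Finset.range (l + 1), ∑ s ∈ Finset.range t,
                  qc p * qCoef q (i' + p) j s * γ s := Finset.sum_comm
            _ = ∑ p ∈ Finset.range (l + 1), qc p *
                  ∑ s ∈ Finset.range t, qCoef q (i' + p) j s * γ s := by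
                apply Finset.sum_congr rfl
                intro p _
                rw [Finset.mul_sum]
                apply Finset.sum_congr rfl
                intro s _
                ring
        have hkey : β i' (j + 1) - ∑ s ∈ Finset.range t, qCoef q i' (j + 1) s * γ s
            = qc l * (β i j - ∑ s ∈ Finset.range t, qCoef q i j s * γ s) := by
          rw [hβrec, hsum, ← Finset.sum_sub_distrib]
          have hc : ∀ p ∈ Finset.range (l + 1),
              qc p * β (i' + p) j - qc p * ∑ s ∈ Finset.range t, qCoef q (i' + p) j s * γ s
              = qc p * (β (i' + p) j - ∑ s ∈ Finset.range t, qCoef q (i' + p) j s * γ s) :=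
            fun p _ => by ring
          rw [Finset.sum_congr rfl hc, Finset.sum_range_succ,
            Finset.sum_eq_zero (fun p hp => by
              rw [hD p (Finset.mem_range.mp hp), mul_zero]), zero_add, ← hii]
        rw [hstep, hkey, pow_succ]
        field_simp


end TMP
end
end

section
/- Let q(x) = Σ_{i=0}^{ℓ} q_i x^i ∈ ℝ[x] with ℓ ≥ 3 and q_ℓ ≠ 0, let k ≥ ℓ, and let β = β^{(2(k+ℓ−2))} be a real 2-dimensional sequence of degree 2(k+ℓ−2) satisfying the relations β_{i,j+1} = Σ_{p=0}^{ℓ} q_p β_{i+p,j} for all i,j ≥ 0 with i + ℓ + j ≤ 2(k+ℓ−2). Define γ_t for t = 0, 1, …, 2kℓ+2 recursively by γ_t = q_ℓ^{−⌊t/ℓ⌋} ( β_{t mod ℓ, ⌊t/ℓ⌋} − Σ_{s=0}^{t−1} q_{t mod ℓ, ⌊t/ℓ⌋, s} · γ_s ), and set γ̃ = (γ₀, …, γ_{2kℓ+2}). Let B be the ordered list of monomials x^j y^i for i = 0,…,k−1 and j = 0,…,ℓ−1 (ordered as 1, x, …, x^{ℓ−1}, y, yx, …, yx^{ℓ−1},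 …, y^{k−1}, …, y^{k−1}x^{ℓ−1}) followed by y^k and y^k x, so |B| = kℓ+2, and let P be the (kℓ+2)×(kℓ+2) real matrix with rows indexed by B and columns indexed by s ∈ {0,1,…,kℓ+1}, whose entry in row x^j y^i and column s is q_{j,i,s}. Then the principal submatrix of the moment matrix M_{k+ℓ−2}(β) on the rows and columns indexed by B equals P · A_{γ̃} · Pᵀ. -/
open MeasureTheory Matrix Finset

noncomputable section

namespace TMP

section Auxiliary

lemma aux_qcoeff {l : ℕ} {qc : ℕ → ℝ} {q : Polynomial ℝ}
    (hq : q = ∑ i ∈ Finset.range (l + 1), Polynomial.C (qc i) * Polynomial.X ^ i)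
    (n : ℕ) : q.coeff n = if n ≤ l then qc n else 0 := by
  subst hq
  rw [Polynomial.finset_sum_coeff]
  simp only [Polynomial.coeff_C_mul, Polynomial.coeff_X_pow, mul_ite, mul_one, mul_zero]
  rw [Finset.sum_ite_eq (Finset.range (l+1)) n fun i => qc i]
  simp [Nat.lt_succ_iff]

lemma aux_qdeg {l : ℕ} {qc : ℕ → ℝ} {q : Polynomial ℝ}
    (hq : q = ∑ i ∈ Finset.range (l + 1), Polynomial.C (qc i) * Polynomial.X ^ i)
    (hql : qc l ≠ 0) : q.natDegree = l := by
  apply le_antisymm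
  · apply Polynomial.natDegree_le_iff_coeff_eq_zero.2
    intro n hn
    rw [aux_qcoeff hq]
    simp [Nat.not_le.2 hn]
  · apply Polynomial.le_natDegree_of_ne_zero
    rw [aux_qcoeff hq]
    simpa using hql

lemma aux_deg_le {l : ℕ} {qc : ℕ → ℝ} {q : Polynomial ℝ}
    (hq : q = ∑ i ∈ Finset.range (l + 1), Polynomial.C (qc i) * Polynomial.X ^ i)
    (i j : ℕ) : (Polynomial.X ^ i * q ^ j : Polynomial ℝ).natDegree ≤ i + j * l := by
  apply le_trans (Polynomial.natDegree_mul_le)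
  gcongr
  · exact le_of_eq (Polynomial.natDegree_X_pow i)
  · apply le_trans (Polynomial.natDegree_pow_le)
    have : q.natDegree ≤ l := by
      apply Polynomial.natDegree_le_iff_coeff_eq_zero.2
      intro n hn; rw [aux_qcoeff hq]; simp [Nat.not_le.2 hn]
    gcongr

lemma aux_vanish {l : ℕ} {qc : ℕ → ℝ} {q : Polynomial ℝ}
    (hq : q = ∑ i ∈ Finset.range (l + 1), Polynomial.C (qc i) * Polynomial.X ^ i)
    (i j s : ℕ) (hs : i + j * l < s) : qCoef q i j s = 0 := by
  apply Polynomial.coeff_eq_zero_of_natDegree_lt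
  exact lt_of_le_of_lt (aux_deg_le hq i j) hs

lemma aux_top {l : ℕ} {qc : ℕ → ℝ} {q : Polynomial ℝ}
    (hq : q = ∑ i ∈ Finset.range (l + 1), Polynomial.C (qc i) * Polynomial.X ^ i)
    (hql : qc l ≠ 0) (i j : ℕ) : qCoef q i j (i + j * l) = qc l ^ j := by
  unfold qCoef
  rw [add_comm i (j*l), Polynomial.coeff_X_pow_mul]
  have h1 : (q ^ j).natDegree = j * l := by
    rw [Polynomial.natDegree_pow, aux_qdeg hq hql]
  have h2 : (q ^ j).coeff (j * l) = (q ^ j).leadingCoeff := by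
    rw [Polynomial.leadingCoeff, h1]
  rw [h2, Polynomial.leadingCoeff_pow, Polynomial.leadingCoeff, aux_qdeg hq hql, aux_qcoeff hq]
  simp

lemma aux_expand {l : ℕ} {qc : ℕ → ℝ} {q : Polynomial ℝ}
    (hq : q = ∑ i ∈ Finset.range (l + 1), Polynomial.C (qc i) * Polynomial.X ^ i)
    (i j s : ℕ) :
    qCoef q i (j+1) s = ∑ p ∈ Finset.range (l+1), qc p * qCoef q (i+p) j s := by
  unfold qCoef
  have : (Polynomial.X ^ i * q ^ (j+1) : Polynomial ℝ)
      = ∑ p ∈ Finset.range (l+1), Polynomial.C (qc p) * (Polynomial.X ^ (i+p) * q ^ j) := by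
    have h0 : (Polynomial.X ^ i * q ^ (j+1) : Polynomial ℝ) = Polynomial.X ^ i * q ^ j * q := by
      ring
    rw [h0]
    generalize (q ^ j : Polynomial ℝ) = Q
    rw [hq, Finset.mul_sum]
    apply Finset.sum_congr rfl
    intro p _
    rw [pow_add]
    ring
  rw [this, Polynomial.finset_sum_coeff]
  simp [Polynomial.coeff_C_mul]

lemma aux_conv (p r : Polynomial ℝ) (g : ℕ → ℝ) (N : ℕ)
    (hp : p.natDegree < N) (hr : r.natDegree < N) :
    ∑ s ∈ Finset.range (2*N-1), (p*r).coeff s * g s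
      = ∑ u ∈ Finset.range N, ∑ v ∈ Finset.range N, p.coeff u * g (u+v) * r.coeff v := by
  have hT : ∀ u v : ℕ, N ≤ u ∨ N ≤ v → p.coeff u * g (u+v) * r.coeff v = 0 := by
    intro u v h
    rcases h with h | h
    · rw [Polynomial.coeff_eq_zero_of_natDegree_lt (lt_of_lt_of_le hp h)]; ring
    · rw [Polynomial.coeff_eq_zero_of_natDegree_lt (lt_of_lt_of_le hr h)]; ring
  have L1 : ∑ s ∈ Finset.range (2*N-1), (p*r).coeff s * g s
      = ∑ x ∈ (Finset.range (2*N-1)).sigma (fun s => Finset.HasAntidiagonal.antidiagonal s),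
          p.coeff x.2.1 * g (x.2.1 + x.2.2) * r.coeff x.2.2 := by
    rw [Finset.sum_sigma]
    apply Finset.sum_congr rfl
    intro s hs
    rw [Polynomial.coeff_mul, Finset.sum_mul]
    apply Finset.sum_congr rfl
    intro x hx
    rw [Finset.HasAntidiagonal.mem_antidiagonal] at hx
    rw [hx]; ring
  have L2 : ∑ x ∈ (Finset.range (2*N-1)).sigma (fun s => Finset.HasAntidiagonal.antidiagonal s),
          p.coeff x.2.1 * g (x.2.1 + x.2.2) * r.coeff x.2.2
      = ∑ y ∈ (Finset.range (2*N-1) ×ˢ Finset.range (2*N-1)).filter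
            (fun y => y.1 + y.2 < 2*N-1),
          p.coeff y.1 * g (y.1 + y.2) * r.coeff y.2 := by
    apply Finset.sum_nbij' (i := fun x => (x.2.1, x.2.2)) (j := fun y => ⟨y.1 + y.2, (y.1, y.2)⟩)
    · intro x hx
      simp only [Finset.mem_sigma, Finset.mem_range, Finset.HasAntidiagonal.mem_antidiagonal] at hx
      simp only [Finset.mem_filter, Finset.mem_product, Finset.mem_range]
      omega
    · intro y hy
      simp only [Finset.mem_filter, Finset.mem_product, Finset.mem_range] at hy
      simp only [Finset.mem_sigma, Finset.mem_range, Finset.HasAntidiagonal.mem_antidiagonal]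
      exact ⟨by omega, trivial⟩
    · intro x hx
      simp only [Finset.mem_sigma, Finset.mem_range, Finset.HasAntidiagonal.mem_antidiagonal] at hx
      simp [hx.2]
    · intro y hy; rfl
    · intro x hx; rfl
  have L3 : ∑ u ∈ Finset.range N, ∑ v ∈ Finset.range N, p.coeff u * g (u+v) * r.coeff v
      = ∑ y ∈ (Finset.range (2*N-1) ×ˢ Finset.range (2*N-1)).filter
            (fun y => y.1 + y.2 < 2*N-1),
          p.coeff y.1 * g (y.1 + y.2) * r.coeff y.2 := by
    rw [← Finset.sum_product']
    apply Finset.sum_subset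
    · intro y hy
      simp only [Finset.mem_product, Finset.mem_range] at hy
      simp only [Finset.mem_filter, Finset.mem_product, Finset.mem_range]
      omega
    · intro y hy hy2
      simp only [Finset.mem_product, Finset.mem_range] at hy2
      apply hT
      by_contra h
      push_neg at h
      exact hy2 ⟨by omega, by omega⟩
  rw [L1, L2, L3]

lemma aux_key (l : ℕ) (hl : 3 ≤ l) (qc : ℕ → ℝ) (hql : qc l ≠ 0)
    (q : Polynomial ℝ)
    (hq : q = ∑ i ∈ Finset.range (l + 1), Polynomial.C (qc i) * Polynomial.X ^ i)
    (k : ℕ) (hk : l ≤ k) (β : ℕ → ℕ → ℝ)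
    (hrg : ∀ i j : ℕ, i + l + j ≤ 2 * (k + l - 2) →
      β i (j + 1) = ∑ p ∈ Finset.range (l + 1), qc p * β (i + p) j)
    (γ : ℕ → ℝ)
    (hγ : ∀ t : ℕ, t ≤ 2 * k * l + 2 →
      γ t = (qc l ^ (t / l))⁻¹ *
        (β (t % l) (t / l) - ∑ s ∈ Finset.range t, qCoef q (t % l) (t / l) s * γ s)) :
    ∀ i j : ℕ, i + j * l ≤ 2 * k * l + 2 → (l ≤ i → i + j ≤ 2 * (k + l - 2)) →
      β i j = ∑ s ∈ Finset.range (2 * k * l + 3), qCoef q i j s * γ s := by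
  intro i
  induction i using Nat.strong_induction_on with
  | _ i IH =>
  intro j h1 h2
  by_cases hil : i < l
  · set t := i + j * l with htdef
    have hmod : t % l = i := by
      rw [htdef, Nat.add_mul_mod_self_right, Nat.mod_eq_of_lt hil]
    have hdiv : t / l = j := by
      rw [htdef, Nat.add_mul_div_right _ _ (by omega : 0 < l), Nat.div_eq_of_lt hil]; omega
    have e := hγ t h1
    rw [hmod, hdiv] at e
    have hpow : (qc l ^ j) ≠ 0 := pow_ne_zero _ hql
    have e2 : β i j = (∑ s ∈ Finset.range t, qCoef q i j s * γ s) + qc l ^ j * γ t := by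
      field_simp at e
      linarith [e]
    have e3 : β i j = ∑ s ∈ Finset.range (t+1), qCoef q i j s * γ s := by
      rw [Finset.sum_range_succ]
      rw [e2, aux_top hq hql i j]
    rw [e3]
    apply Finset.sum_subset
    · intro s hs; simp only [Finset.mem_range] at *; omega
    · intro s _ hs2
      simp only [Finset.mem_range] at hs2
      rw [aux_vanish hq i j s (by omega)]
      ring
  · push_neg at hil
    have hb : i + j ≤ 2 * (k + l - 2) := h2 hil
    have hsub : i - l + l = i := Nat.sub_add_cancel hil
    have hjl : (j + 1) * l = j * l + l := by ring
    have hrg1 := hrg (i - l) j (by omega)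
    rw [Finset.sum_range_succ, hsub] at hrg1
    have IH1 : β (i - l) (j + 1)
        = ∑ s ∈ Finset.range (2 * k * l + 3), qCoef q (i - l) (j + 1) s * γ s := by
      apply IH (i - l) (by omega) (j + 1) (by omega) (by omega)
    have IH2 : ∀ p ∈ Finset.range l, qc p * β (i - l + p) j
        = qc p * ∑ s ∈ Finset.range (2 * k * l + 3), qCoef q (i - l + p) j s * γ s := by
      intro p hp
      simp only [Finset.mem_range] at hp
      rw [IH (i - l + p) (by omega) j (by omega) (by omega)]
    rw [IH1, Finset.sum_congr rfl IH2] at hrg1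
    have hc : ∀ s, qc l * qCoef q i j s
        = qCoef q (i - l) (j + 1) s - ∑ p ∈ Finset.range l, qc p * qCoef q (i - l + p) j s := by
      intro s
      rw [aux_expand hq (i - l) j s, Finset.sum_range_succ, hsub]
      ring
    have eq1 : ∑ p ∈ Finset.range l,
          qc p * ∑ s ∈ Finset.range (2 * k * l + 3), qCoef q (i - l + p) j s * γ s
        = ∑ s ∈ Finset.range (2 * k * l + 3),
          (∑ p ∈ Finset.range l, qc p * qCoef q (i - l + p) j s) * γ s := by
      simp_rw [Finset.mul_sum, Finset.sum_mul]
      rw [Finset.sum_comm]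
      apply Finset.sum_congr rfl
      intro s _
      apply Finset.sum_congr rfl
      intro p _
      ring
    have goal' : qc l * β i j
        = qc l * ∑ s ∈ Finset.range (2 * k * l + 3), qCoef q i j s * γ s := by
      rw [Finset.mul_sum]
      have step1 : qc l * β i j
          = (∑ s ∈ Finset.range (2 * k * l + 3), qCoef q (i - l) (j + 1) s * γ s)
            - ∑ p ∈ Finset.range l,
                qc p * ∑ s ∈ Finset.range (2 * k * l + 3), qCoef q (i - l + p) j s * γ s := by
        linarith [hrg1]
      rw [step1, eq1, ← Finset.sum_sub_distrib]
      apply Finset.sum_congr rfl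
      intro s _
      rw [← sub_mul, ← hc s]
      ring
    exact mul_left_cancel₀ hql goal'

lemma aux_arith (l k a b : ℕ) (hl : 3 ≤ l) (hk : l ≤ k) (ha : a ≤ k*l+1) (hb : b ≤ k*l+1)
    (h : l ≤ a % l + b % l) : a % l + b % l + (a / l + b / l) ≤ 2 * (k + l - 2) := by
  have hl0 : 0 < l := by omega
  have e_a : l * (a / l) + a % l = a := Nat.div_add_mod a l
  have e_b : l * (b / l) + b % l = b := Nat.div_add_mod b l
  have hrl : a % l < l := Nat.mod_lt a hl0
  have hsl : b % l < l := Nat.mod_lt b hl0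
  have hu : a / l ≤ k := by
    by_contra h'
    push_neg at h'
    have h2 : l * (k+1) ≤ l * (a / l) := Nat.mul_le_mul_left l h'
    have h3 : l * (k+1) = k * l + l := by ring
    omega
  have hv : b / l ≤ k := by
    by_contra h'
    push_neg at h'
    have h2 : l * (k+1) ≤ l * (b / l) := Nat.mul_le_mul_left l h'
    have h3 : l * (k+1) = k * l + l := by ring
    omega
  have cu : a / l = k → a % l ≤ 1 := by
    intro hh
    rw [hh] at e_a
    have : l * k = k * l := by ring
    omega
  have cv : b / l = k → b % l ≤ 1 := by
    intro hh
    rw [hh] at e_b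
    have : l * k = k * l := by ring
    omega
  rcases Nat.lt_or_ge (a / l) k with h1 | h1 <;> rcases Nat.lt_or_ge (b / l) k with h2 | h2 <;>
    omega


end Auxiliary

/-- Claim 6: `(M_{k+ℓ−2})|_B = P A_{γ̃} Pᵀ`. -/
theorem statement14 (l : ℕ) (hl : 3 ≤ l) (qc : ℕ → ℝ) (hql : qc l ≠ 0)
    (q : Polynomial ℝ)
    (hq : q = ∑ i ∈ Finset.range (l + 1), Polynomial.C (qc i) * Polynomial.X ^ i)
    (k : ℕ) (hk : l ≤ k) (β : ℕ → ℕ → ℝ)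
    (hrg : ∀ i j : ℕ, i + l + j ≤ 2 * (k + l - 2) →
      β i (j + 1) = ∑ p ∈ Finset.range (l + 1), qc p * β (i + p) j)
    (γ : ℕ → ℝ)
    (hγ : ∀ t : ℕ, t ≤ 2 * k * l + 2 →
      γ t = (qc l ^ (t / l))⁻¹ *
        (β (t % l) (t / l) - ∑ s ∈ Finset.range t, qCoef q (t % l) (t / l) s * γ s)) :
    -- `b`-th monomial of `B` is `x^{b mod ℓ} y^{⌊b/ℓ⌋}` (so `b = kℓ ↦ y^k`, `b = kℓ+1 ↦ y^k x`)
    (Matrix.of fun b b' : Fin (k * l + 2) =>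
        β ((b : ℕ) % l + (b' : ℕ) % l) ((b : ℕ) / l + (b' : ℕ) / l)) =
      (Matrix.of fun (b : Fin (k * l + 2)) (s : Fin (k * l + 2)) =>
          qCoef q ((b : ℕ) % l) ((b : ℕ) / l) (s : ℕ)) *
        (Matrix.of fun u v : Fin (k * l + 2) => γ ((u : ℕ) + (v : ℕ))) *
        (Matrix.of fun (b : Fin (k * l + 2)) (s : Fin (k * l + 2)) =>
          qCoef q ((b : ℕ) % l) ((b : ℕ) / l) (s : ℕ))ᵀ := by
  have hl0 : 0 < l := by omega
  have h2kl : 2 * k * l = 2 * (k * l) := by ring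
  ext a b
  have ha : (a : ℕ) ≤ k * l + 1 := by omega
  have hb : (b : ℕ) ≤ k * l + 1 := by omega
  have e_a : (a : ℕ) % l + (a : ℕ) / l * l = (a : ℕ) := Nat.mod_add_div' _ _
  have e_b : (b : ℕ) % l + (b : ℕ) / l * l = (b : ℕ) := Nat.mod_add_div' _ _
  have hjj : ((a : ℕ) / l + (b : ℕ) / l) * l = (a : ℕ) / l * l + (b : ℕ) / l * l := by ring
  have hkey : β ((a : ℕ) % l + (b : ℕ) % l) ((a : ℕ) / l + (b : ℕ) / l)
      = ∑ s ∈ Finset.range (2 * k * l + 3),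
          qCoef q ((a : ℕ) % l + (b : ℕ) % l) ((a : ℕ) / l + (b : ℕ) / l) s * γ s := by
    apply aux_key l hl qc hql q hq k hk β hrg γ hγ
    · omega
    · intro hli
      exact aux_arith l k a b hl hk ha hb hli
  have hprod : (Polynomial.X ^ ((a : ℕ) % l + (b : ℕ) % l)
        * q ^ ((a : ℕ) / l + (b : ℕ) / l) : Polynomial ℝ)
      = (Polynomial.X ^ ((a : ℕ) % l) * q ^ ((a : ℕ) / l))
        * (Polynomial.X ^ ((b : ℕ) % l) * q ^ ((b : ℕ) / l)) := by
    rw [pow_add, pow_add]; ring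
  have hdeg1 : (Polynomial.X ^ ((a : ℕ) % l) * q ^ ((a : ℕ) / l) : Polynomial ℝ).natDegree
      < k * l + 2 := by
    have := aux_deg_le hq ((a : ℕ) % l) ((a : ℕ) / l)
    omega
  have hdeg2 : (Polynomial.X ^ ((b : ℕ) % l) * q ^ ((b : ℕ) / l) : Polynomial ℝ).natDegree
      < k * l + 2 := by
    have := aux_deg_le hq ((b : ℕ) % l) ((b : ℕ) / l)
    omega
  have hconv := aux_conv _ _ γ (k * l + 2) hdeg1 hdeg2
  have h2N : 2 * (k * l + 2) - 1 = 2 * k * l + 3 := by omega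
  rw [h2N] at hconv
  have hLHS : β ((a : ℕ) % l + (b : ℕ) % l) ((a : ℕ) / l + (b : ℕ) / l)
      = ∑ u ∈ Finset.range (k * l + 2), ∑ v ∈ Finset.range (k * l + 2),
          qCoef q ((a : ℕ) % l) ((a : ℕ) / l) u * γ (u + v)
            * qCoef q ((b : ℕ) % l) ((b : ℕ) / l) v := by
    rw [hkey]
    have e1 : ∑ s ∈ Finset.range (2 * k * l + 3),
          qCoef q ((a : ℕ) % l + (b : ℕ) % l) ((a : ℕ) / l + (b : ℕ) / l) s * γ s
        = ∑ s ∈ Finset.range (2 * k * l + 3),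
          ((Polynomial.X ^ ((a : ℕ) % l) * q ^ ((a : ℕ) / l))
            * (Polynomial.X ^ ((b : ℕ) % l) * q ^ ((b : ℕ) / l))).coeff s * γ s := by
      apply Finset.sum_congr rfl
      intro s _
      unfold qCoef
      rw [hprod]
    rw [e1, hconv]
    rfl
  simp only [Matrix.mul_apply, Matrix.transpose_apply, Matrix.of_apply]
  rw [hLHS, Finset.sum_comm]
  rw [← Fin.sum_univ_eq_sum_range (fun v => ∑ u ∈ Finset.range (k * l + 2),
    qCoef q ((a : ℕ) % l) ((a : ℕ) / l) u * γ (u + v)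
      * qCoef q ((b : ℕ) % l) ((b : ℕ) / l) v)]
  apply Finset.sum_congr rfl
  intro v _
  rw [Finset.sum_mul]
  rw [← Fin.sum_univ_eq_sum_range (fun u =>
    qCoef q ((a : ℕ) % l) ((a : ℕ) / l) u * γ (u + (v : ℕ))
      * qCoef q ((b : ℕ) % l) ((b : ℕ) / l) (v : ℕ))]


end TMP
end
end

section
/- Let ℓ ∈ ℕ, ℓ ≥ 2, let k ≥ ℓ+1, and let β = β^{(2(k+ℓ))} be a real 2-dimensional sequence of degree 2(k+ℓ) satisfying the relations β_{i+ℓ, j+1} = β_{i,j} for all i,j ≥ 0 with i + ℓ + j + 1 ≤ 2(k+ℓ). Define γ_t for −2kℓ−2 ≤ t ≤ 2k+2 by γ_t = β_{t,0} if t ≥ 0 and γ_t = β_{t + ℓ⌈|t|/ℓ⌉, ⌈|t|/ℓ⌉} if t < 0, and set γ̃ = (γ_{−2kℓ−2}, …, γ_{2k+2}). Let B be the ordered list of monomials y^{k+1}x^{ℓ−1}, y^k, y^k x, …, y^k x^{ℓ−1}, …, y, yx, …, yx^{ℓ−1}, 1, x, …, x^{k+1} (so that the values i − ℓj of the monomials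 x^i y^j in B run through −kℓ−1, −kℓ, …, k+1 in order, and |B| = kℓ + k + 3). Then the restriction of the moment matrix M_{k+ℓ}(β) to the rows and columns indexed by B equals the Hankel matrix A_{γ̃}; that is, for any two monomials x^{i₁}y^{j₁} and x^{i₂}y^{j₂} in B, β_{i₁+i₂, j₁+j₂} = γ_{(i₁−ℓj₁)+(i₂−ℓj₂)}. -/
open MeasureTheory Matrix Finset

noncomputable section

namespace TMP

/-- A monomial `x^i y^j` belongs to the list
`B = (y^{k+1}x^{ℓ−1}, y^k, y^k x, …, y^k x^{ℓ−1}, …, y, yx, …, yx^{ℓ−1}, 1, x, …, x^{k+1})`. -/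
def memB (l k i j : ℕ) : Prop :=
  (j = k + 1 ∧ i = l - 1) ∨ (1 ≤ j ∧ j ≤ k ∧ i ≤ l - 1) ∨ (j = 0 ∧ i ≤ k + 1)


/-! The relation `β_{i+ℓ,j+1} = β_{i,j}` preserves `i - ℓj`, so shifting `(i, j)` down by
`(ℓ, 1)` until `j = 0` or `i < ℓ` (the two cases in which `γ` is given directly) shows
`β_{i,j} = γ_{i-ℓj}` in every degree where the relation is available. Monomials of `B` have
degree at most `k + ℓ`, so all entries of `(M_{k+ℓ})|_B` are in range. -/

theorem moment_eq_gamma_sub (l d : ℕ) (β : ℕ → ℕ → ℝ)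
    (hshift : ∀ i j : ℕ, i + l + j + 1 ≤ d → β (i + l) (j + 1) = β i j)
    (γ : ℤ → ℝ) (hγpos : ∀ t : ℕ, γ t = β t 0)
    (hγneg : ∀ i j : ℕ, 1 ≤ i → j < l → γ (-(i * l : ℤ) + j) = β j i)
    (i j : ℕ) (hdeg : i + j ≤ d) : β i j = γ ((i : ℤ) - l * j) := by
  induction j generalizing i with
  | zero => simp [hγpos i]
  | succ j ih =>
    by_cases hli : l ≤ i
    · obtain ⟨i', rfl⟩ := Nat.exists_eq_add_of_le' hli
      rw [hshift i' j (by omega), ih i' (by omega)]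
      congr 1; push_cast; ring
    · rw [← hγneg (j + 1) i (by omega) (by omega)]
      congr 1; push_cast; ring

theorem add_le_of_memB {l k i j : ℕ} (hl : 1 ≤ l) (h : memB l k i j) : i + j ≤ k + l := by
  unfold memB at h; omega

theorem statement16_general (l : ℕ) (hl : 2 ≤ l) (k : ℕ) (β : ℕ → ℕ → ℝ)
    (hrg : ∀ i j : ℕ, i + l + j + 1 ≤ 2 * (k + l) → β (i + l) (j + 1) = β i j)
    (γ : ℤ → ℝ)
    (hγpos : ∀ t : ℕ, γ t = β t 0)
    (hγneg : ∀ i j : ℕ, 1 ≤ i → j < l → γ (-(i * l : ℤ) + j) = β j i) :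
    ∀ i₁ j₁ i₂ j₂ : ℕ, memB l k i₁ j₁ → memB l k i₂ j₂ →
      β (i₁ + i₂) (j₁ + j₂) = γ (((i₁ : ℤ) - l * j₁) + ((i₂ : ℤ) - l * j₂)) := by
  intro i₁ j₁ i₂ j₂ h₁ h₂
  have hdeg₁ := add_le_of_memB (by omega) h₁
  have hdeg₂ := add_le_of_memB (by omega) h₂
  rw [moment_eq_gamma_sub l _ β hrg γ hγpos hγneg _ _ (by omega)]
  congr 1; push_cast; ring

/-- Claim 2: `(M_{k+ℓ})|_B = A_{γ̃}`, entrywise. -/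
theorem statement16 (l : ℕ) (hl : 2 ≤ l) (k : ℕ) (hk : l + 1 ≤ k) (β : ℕ → ℕ → ℝ)
    (hrg : ∀ i j : ℕ, i + l + j + 1 ≤ 2 * (k + l) → β (i + l) (j + 1) = β i j)
    (γ : ℤ → ℝ)
    (hγpos : ∀ t : ℕ, γ t = β t 0)
    (hγneg : ∀ i j : ℕ, 1 ≤ i → j < l → γ (-(i * l : ℤ) + j) = β j i) :
    ∀ i₁ j₁ i₂ j₂ : ℕ, memB l k i₁ j₁ → memB l k i₂ j₂ →
      β (i₁ + i₂) (j₁ + j₂) = γ (((i₁ : ℤ) - l * j₁) + ((i₂ : ℤ) - l * j₂)) :=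
  statement16_general l hl k β hrg γ hγpos hγneg

end TMP
end
end
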